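/- arXiv:2603.13551 — 2 statements merged into one kernel-verified Lean document; each statement's English description precedes it below -/
import Mathlib

section
/- Let m ≥ 3 and let L be a pseudo-Finsler Lagrangian on Ω with spray nonlinear connection N, nonlinear curvature R^μ{}_{αβ}, Ricci scalar Ric(v) := R^μ{}_{μα}v^α, and χ_α := (∂R^γ{}_{αν}/∂v^γ)v^ν. Then the following three conditions on Ω are equivalent: (a) the vacuum gravitational equation R^μ{}_{μα} − (1/2)(g^{μν}∂R^σ{}_{σν}/∂v^μ)·g_{αβ}v^β = 0 holds at every point of Ω and for every α; (b) the Ricci 1-form vanishes: R^μ{}_{μα} = 0 at every point of Ω and for every α; (c) Ric(v) = 0 and χ_α = 0 at every point of Ω and for every α. -/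
open scoped BigOperators

noncomputable section

/-- `Vec m` is the model space `ℝ^m`. -/
abbrev Vec (m : ℕ) : Type := Fin m → ℝ

variable {m : ℕ}

/-- Partial derivative in the velocity (second) variable: `∂f/∂v^i (x,v)`. -/
def pdv (f : Vec m → Vec m → ℝ) (i : Fin m) (x v : Vec m) : ℝ :=
  fderiv ℝ (f x) v (Pi.single i 1)

/-- Partial derivative in the position (first) variable: `∂f/∂x^i (x,v)`. -/
def pdx (f : Vec m → Vec m → ℝ) (i : Fin m) (x v : Vec m) : ℝ :=
  fderiv ℝ (fun y => f y v) x (Pi.single i 1)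

/-- Vertical Hessian `g_{αβ}(x,v) = ∂²L/∂v^α∂v^β` of the Lagrangian. -/
def gmet (L : Vec m → Vec m → ℝ) (x v : Vec m) : Matrix (Fin m) (Fin m) ℝ :=
  Matrix.of fun α β => pdv (pdv L β) α x v

/-- Inverse metric `g^{αβ}` (nonsingular matrix inverse). -/
def ginv (L : Vec m → Vec m → ℝ) (x v : Vec m) : Matrix (Fin m) (Fin m) ℝ :=
  (gmet L x v)⁻¹

/-- Geodesic spray coefficients
`G^α = (1/4) g^{αδ}(∂g_{δγ}/∂x^β + ∂g_{δβ}/∂x^γ − ∂g_{βγ}/∂x^δ) v^β v^γ`. -/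
def spray (L : Vec m → Vec m → ℝ) (α : Fin m) (x v : Vec m) : ℝ :=
  (1/4) * ∑ δ, ginv L x v α δ *
    (∑ β, ∑ γ,
      (pdx (fun y w => gmet L y w δ γ) β x v
        + pdx (fun y w => gmet L y w δ β) γ x v
        - pdx (fun y w => gmet L y w β γ) δ x v) * v β * v γ)

/-- The spray nonlinear connection `N^α_μ = ∂G^α/∂v^μ`. -/
def nConn (L : Vec m → Vec m → ℝ) (α μ : Fin m) (x v : Vec m) : ℝ :=
  pdv (spray L α) μ x v

/-- Horizontal derivative `δ_μ f = ∂f/∂x^μ − N^ν_μ ∂f/∂v^ν` for a nonlinear connection `N`. -/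
def hderiv (N : Fin m → Fin m → Vec m → Vec m → ℝ) (f : Vec m → Vec m → ℝ)
    (μ : Fin m) (x v : Vec m) : ℝ :=
  pdx f μ x v - ∑ ν, N ν μ x v * pdv f ν x v

/-- Curvature of the nonlinear connection: `R^μ_{αβ} = δ_α N^μ_β − δ_β N^μ_α`. -/
def curv (N : Fin m → Fin m → Vec m → Vec m → ℝ) (μ α β : Fin m) (x v : Vec m) : ℝ :=
  hderiv N (N μ β) α x v - hderiv N (N μ α) β x v

/-- Ricci scalar `Ric(v) = R^μ{}_{μα} v^α`. -/
def ricciScalar (N : Fin m → Fin m → Vec m → Vec m → ℝ) (x v : Vec m) : ℝ :=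
  ∑ α, (∑ μ, curv N μ μ α x v) * v α

/-- Ricci 1-form component `(Ric_v)_α = R^μ{}_{μα}`. -/
def ricciOne (N : Fin m → Fin m → Vec m → Vec m → ℝ) (α : Fin m) (x v : Vec m) : ℝ :=
  ∑ μ, curv N μ μ α x v

/-- `χ_α := (∂R^γ{}_{αν}/∂v^γ) v^ν`. -/
def chiForm (N : Fin m → Fin m → Vec m → Vec m → ℝ) (α : Fin m) (x v : Vec m) : ℝ :=
  ∑ γ, ∑ ν, pdv (curv N γ α ν) γ x v * v ν

/-- Partial derivative `∂u^α/∂x^μ` of a vector field on the base. -/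
def pde (u : Vec m → Vec m) (α μ : Fin m) (x : Vec m) : ℝ :=
  fderiv ℝ (fun y => u y α) x (Pi.single μ 1)

/-- Covariant derivative `(D_X u)^α = (∂u^α/∂x^μ + N^α_μ(x,u(x))) X^μ`. -/
def covD (L : Vec m → Vec m → ℝ) (u X : Vec m → Vec m) (x : Vec m) : Vec m :=
  fun α => ∑ μ, (pde u α μ x + nConn L α μ x (u x)) * X x μ

/-- Flipped derivative `(D̃_u X)^α = (∂X^α/∂x^μ) u^μ + N^α_μ(x,u(x)) X^μ`. -/
def flipD (L : Vec m → Vec m → ℝ) (u X : Vec m → Vec m) (x : Vec m) : Vec m :=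
  fun α => (∑ μ, pde X α μ x * u x μ) + ∑ μ, nConn L α μ x (u x) * X x μ

/-- Lie bracket `[X,Y]^α = X^μ ∂Y^α/∂x^μ − Y^μ ∂X^α/∂x^μ`. -/
def lieB (X Y : Vec m → Vec m) (x : Vec m) : Vec m :=
  fun α => ∑ μ, (X x μ * pde Y α μ x - Y x μ * pde X α μ x)

/-- Scalar product `g_u(X,Y)(x) = g_{αβ}(x,u(x)) X^α Y^β`. -/
def gProd (L : Vec m → Vec m → ℝ) (u X Y : Vec m → Vec m) (x : Vec m) : ℝ :=
  ∑ α, ∑ β, gmet L x (u x) α β * X x α * Y x β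

/-- Directional derivative `∂_X f = X^μ ∂f/∂x^μ`. -/
def dirD (X : Vec m → Vec m) (f : Vec m → ℝ) (x : Vec m) : ℝ :=
  ∑ μ, X x μ * fderiv ℝ f x (Pi.single μ 1)



/- ### Auxiliary machinery: smoothness, homogeneity (Euler), Schwarz symmetry on Ω -/
section AuxTools

variable {Ω : Set (Vec m × Vec m)} {f g : Vec m → Vec m → ℝ} {x v : Vec m} {i j : Fin m}
  {k l : ℤ}

def unc (f : Vec m → Vec m → ℝ) : Vec m × Vec m → ℝ := fun p => f p.1 p.2

def SmOn (Ω : Set (Vec m × Vec m)) (f : Vec m → Vec m → ℝ) : Prop :=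
  ∀ n : ℕ, ContDiffOn ℝ n (unc f) Ω


lemma SmOn.contDiffAt (hf : SmOn Ω f) (hΩ : IsOpen Ω) (hp : (x, v) ∈ Ω) (n : ℕ) :
    ContDiffAt ℝ n (unc f) (x, v) :=
  (hf n).contDiffAt (hΩ.mem_nhds hp)

lemma SmOn.sliceV (hf : SmOn Ω f) (hΩ : IsOpen Ω) (hp : (x, v) ∈ Ω) (n : ℕ) :
    ContDiffAt ℝ n (f x) v := by
  have h1 : ContDiffAt ℝ n (fun w : Vec m => ((x, w) : Vec m × Vec m)) v :=
    contDiffAt_const.prodMk contDiffAt_id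
  exact (hf.contDiffAt hΩ hp n).comp v h1

lemma SmOn.sliceX (hf : SmOn Ω f) (hΩ : IsOpen Ω) (hp : (x, v) ∈ Ω) (n : ℕ) :
    ContDiffAt ℝ n (fun y => f y v) x := by
  have h1 : ContDiffAt ℝ n (fun y : Vec m => ((y, v) : Vec m × Vec m)) x :=
    contDiffAt_id.prodMk contDiffAt_const
  exact (hf.contDiffAt hΩ hp n).comp x h1

lemma SmOn.diffV (hf : SmOn Ω f) (hΩ : IsOpen Ω) (hp : (x, v) ∈ Ω) :
    DifferentiableAt ℝ (f x) v :=
  (hf.sliceV hΩ hp 1).differentiableAt (by simp)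

lemma SmOn.diffX (hf : SmOn Ω f) (hΩ : IsOpen Ω) (hp : (x, v) ∈ Ω) :
    DifferentiableAt ℝ (fun y => f y v) x :=
  (hf.sliceX hΩ hp 1).differentiableAt (by simp)

lemma pdv_eq_full (hf : SmOn Ω f) (hΩ : IsOpen Ω) (hp : (x, v) ∈ Ω) :
    pdv f i x v = fderiv ℝ (unc f) (x, v) (0, Pi.single i 1) := by
  have hF : DifferentiableAt ℝ (unc f) (x, v) :=
    ((hf.contDiffAt hΩ hp 1).differentiableAt (by simp))
  have hc : HasFDerivAt (f x)
      ((fderiv ℝ (unc f) (x, v)).comp (ContinuousLinearMap.inr ℝ (Vec m) (Vec m))) v :=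
    hF.hasFDerivAt.comp v (hasFDerivAt_prodMk_right x v)
  rw [pdv, hc.fderiv]; rfl

lemma pdx_eq_full (hf : SmOn Ω f) (hΩ : IsOpen Ω) (hp : (x, v) ∈ Ω) :
    pdx f i x v = fderiv ℝ (unc f) (x, v) (Pi.single i 1, 0) := by
  have hF : DifferentiableAt ℝ (unc f) (x, v) :=
    ((hf.contDiffAt hΩ hp 1).differentiableAt (by simp))
  have hc : HasFDerivAt (fun y => f y v)
      ((fderiv ℝ (unc f) (x, v)).comp (ContinuousLinearMap.inl ℝ (Vec m) (Vec m))) x :=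
    by have := hF.hasFDerivAt.comp x (hasFDerivAt_prodMk_left (𝕜 := ℝ) x v); exact this
  rw [pdx, hc.fderiv]; rfl

/-- the full-derivative function in direction w, smooth on Ω -/
lemma contDiffAt_fderiv_apply (hf : SmOn Ω f) (hΩ : IsOpen Ω) (hp : (x, v) ∈ Ω)
    (n : ℕ) (w : Vec m × Vec m) :
    ContDiffAt ℝ n (fun p : Vec m × Vec m => fderiv ℝ (unc f) p w) (x, v) := by
  have h1 : ContDiffAt ℝ n (fderiv ℝ (unc f)) (x, v) :=
    (hf.contDiffAt hΩ hp (n + 1)).fderiv_right (by exact_mod_cast le_rfl)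
  exact h1.clm_apply contDiffAt_const

lemma SmOn.pdv (hf : SmOn Ω f) (hΩ : IsOpen Ω) : SmOn Ω (pdv f i) := by
  intro n
  have : ContDiffOn ℝ n (fun p : Vec m × Vec m =>
      fderiv ℝ (unc f) p (0, Pi.single i 1)) Ω := fun p hp =>
    (contDiffAt_fderiv_apply hf hΩ (x := p.1) (v := p.2) hp n _).contDiffWithinAt
  exact this.congr fun p hp => pdv_eq_full hf hΩ hp

lemma SmOn.pdx (hf : SmOn Ω f) (hΩ : IsOpen Ω) : SmOn Ω (pdx f i) := by
  intro n
  have : ContDiffOn ℝ n (fun p : Vec m × Vec m =>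
      fderiv ℝ (unc f) p (Pi.single i 1, 0)) Ω := fun p hp =>
    (contDiffAt_fderiv_apply hf hΩ (x := p.1) (v := p.2) hp n _).contDiffWithinAt
  exact this.congr fun p hp => pdx_eq_full hf hΩ hp

/-- congruence: functions agreeing on Ω have the same pdv on Ω -/
lemma pdv_congr (hΩ : IsOpen Ω) (h : ∀ q ∈ Ω, f q.1 q.2 = g q.1 q.2) (hp : (x, v) ∈ Ω) :
    pdv f i x v = pdv g i x v := by
  have hs : IsOpen {w : Vec m | (x, w) ∈ Ω} := hΩ.preimage (Continuous.prodMk_right x)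
  have he : f x =ᶠ[nhds v] g x := by
    filter_upwards [hs.mem_nhds hp] with w hw using h (x, w) hw
  unfold pdv; rw [he.fderiv_eq]

lemma pdx_congr (hΩ : IsOpen Ω) (h : ∀ q ∈ Ω, f q.1 q.2 = g q.1 q.2) (hp : (x, v) ∈ Ω) :
    pdx f i x v = pdx g i x v := by
  have hs : IsOpen {y : Vec m | (y, v) ∈ Ω} := hΩ.preimage (continuous_id.prodMk continuous_const)
  have he : (fun y => f y v) =ᶠ[nhds x] (fun y => g y v) := by
    filter_upwards [hs.mem_nhds hp] with y hy using h (y, v) hy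
  unfold pdx; rw [he.fderiv_eq]

lemma pdv_zero_of (hΩ : IsOpen Ω) (h : ∀ q ∈ Ω, f q.1 q.2 = 0) (hp : (x, v) ∈ Ω) :
    pdv f i x v = 0 := by
  rw [pdv_congr (g := fun _ _ => 0) hΩ h hp]
  simp [pdv]

lemma hasFDerivAt_fderiv_apply (hf : SmOn Ω f) (hΩ : IsOpen Ω) (hp : (x, v) ∈ Ω)
    (w : Vec m × Vec m) :
    HasFDerivAt (fun p : Vec m × Vec m => fderiv ℝ (unc f) p w)
      ((ContinuousLinearMap.apply ℝ ℝ w).comp (fderiv ℝ (fderiv ℝ (unc f)) (x, v))) (x, v) := by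
  have hd : DifferentiableAt ℝ (fderiv ℝ (unc f)) (x, v) :=
    ((hf.contDiffAt hΩ hp 2).fderiv_right (m := 1)
      (by exact_mod_cast le_rfl)).differentiableAt (by simp)
  exact (ContinuousLinearMap.apply ℝ ℝ w).hasFDerivAt.comp _ hd.hasFDerivAt

lemma fderiv_dir_pdv (hf : SmOn Ω f) (hΩ : IsOpen Ω) (hp : (x, v) ∈ Ω)
    {w : Vec m × Vec m} :
    pdv (fun x v => fderiv ℝ (unc f) (x, v) w) i x v
      = fderiv ℝ (fderiv ℝ (unc f)) (x, v) (0, Pi.single i 1) w := by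
  have hG : SmOn Ω (fun x v => fderiv ℝ (unc f) (x, v) w) := fun n => fun p hp' =>
    (contDiffAt_fderiv_apply hf hΩ (x := p.1) (v := p.2) hp' n _).contDiffWithinAt
  rw [pdv_eq_full hG hΩ hp]
  rw [show unc (fun x v => fderiv ℝ (unc f) (x, v) w)
      = fun p : Vec m × Vec m => fderiv ℝ (unc f) p w from rfl,
    (hasFDerivAt_fderiv_apply hf hΩ hp w).fderiv]
  rfl

lemma fderiv_dir_pdx (hf : SmOn Ω f) (hΩ : IsOpen Ω) (hp : (x, v) ∈ Ω)
    {w : Vec m × Vec m} :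
    pdx (fun x v => fderiv ℝ (unc f) (x, v) w) i x v
      = fderiv ℝ (fderiv ℝ (unc f)) (x, v) (Pi.single i 1, 0) w := by
  have hG : SmOn Ω (fun x v => fderiv ℝ (unc f) (x, v) w) := fun n => fun p hp' =>
    (contDiffAt_fderiv_apply hf hΩ (x := p.1) (v := p.2) hp' n _).contDiffWithinAt
  rw [pdx_eq_full hG hΩ hp]
  rw [show unc (fun x v => fderiv ℝ (unc f) (x, v) w)
      = fun p : Vec m × Vec m => fderiv ℝ (unc f) p w from rfl,
    (hasFDerivAt_fderiv_apply hf hΩ hp w).fderiv]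
  rfl

/-- Schwarz in v -/
lemma pdv_pdv_comm (hf : SmOn Ω f) (hΩ : IsOpen Ω) (hp : (x, v) ∈ Ω) :
    pdv (pdv f i) j x v = pdv (pdv f j) i x v := by
  have hsym : IsSymmSndFDerivAt ℝ (unc f) (x, v) :=
    (hf.contDiffAt hΩ hp 2).isSymmSndFDerivAt (by simp [minSmoothness_of_isRCLikeNormedField])
  have e1 : pdv (pdv f i) j x v
      = fderiv ℝ (fderiv ℝ (unc f)) (x, v) (0, Pi.single j 1) (0, Pi.single i 1) := by
    rw [pdv_congr (g := fun x v => fderiv ℝ (unc f) (x, v) (0, Pi.single i 1)) hΩ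
      (fun q hq => pdv_eq_full hf hΩ (x := q.1) (v := q.2) hq) hp,
      fderiv_dir_pdv (i := j) hf hΩ hp]
  have e2 : pdv (pdv f j) i x v
      = fderiv ℝ (fderiv ℝ (unc f)) (x, v) (0, Pi.single i 1) (0, Pi.single j 1) := by
    rw [pdv_congr (g := fun x v => fderiv ℝ (unc f) (x, v) (0, Pi.single j 1)) hΩ
      (fun q hq => pdv_eq_full hf hΩ (x := q.1) (v := q.2) hq) hp,
      fderiv_dir_pdv (i := i) hf hΩ hp]
  rw [e1, e2, hsym _ _]

/-- mixed Schwarz -/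
lemma pdv_pdx_comm (hf : SmOn Ω f) (hΩ : IsOpen Ω) (hp : (x, v) ∈ Ω) :
    pdv (pdx f i) j x v = pdx (pdv f j) i x v := by
  have hsym : IsSymmSndFDerivAt ℝ (unc f) (x, v) :=
    (hf.contDiffAt hΩ hp 2).isSymmSndFDerivAt (by simp [minSmoothness_of_isRCLikeNormedField])
  have e1 : pdv (pdx f i) j x v
      = fderiv ℝ (fderiv ℝ (unc f)) (x, v) (0, Pi.single j 1) (Pi.single i 1, 0) := by
    rw [pdv_congr (g := fun x v => fderiv ℝ (unc f) (x, v) (Pi.single i 1, 0)) hΩ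
      (fun q hq => pdx_eq_full hf hΩ (x := q.1) (v := q.2) hq) hp, fderiv_dir_pdv hf hΩ hp]
  have e2 : pdx (pdv f j) i x v
      = fderiv ℝ (fderiv ℝ (unc f)) (x, v) (Pi.single i 1, 0) (0, Pi.single j 1) := by
    rw [pdx_congr (g := fun x v => fderiv ℝ (unc f) (x, v) (0, Pi.single j 1)) hΩ
      (fun q hq => pdv_eq_full hf hΩ (x := q.1) (v := q.2) hq) hp, fderiv_dir_pdx hf hΩ hp]
  rw [e1, e2, hsym _ _]
-- SmOn closure
lemma smOn_const {c : ℝ} : SmOn Ω (fun _ _ => c) := fun _ => contDiffOn_const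
lemma smOn_coordv (j : Fin m) : SmOn Ω (fun _ v => v j) := fun n => by
  have : ContDiff ℝ n (fun p : Vec m × Vec m => p.2 j) :=
    (ContinuousLinearMap.comp (ContinuousLinearMap.proj j)
      (ContinuousLinearMap.snd ℝ (Vec m) (Vec m))).contDiff
  exact this.contDiffOn
lemma SmOn.add (hf : SmOn Ω f) (hg : SmOn Ω g) :
    SmOn Ω (fun x v => f x v + g x v) := fun n => (hf n).add (hg n)
lemma SmOn.sub (hf : SmOn Ω f) (hg : SmOn Ω g) :
    SmOn Ω (fun x v => f x v - g x v) := fun n => (hf n).sub (hg n)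
lemma SmOn.mul (hf : SmOn Ω f) (hg : SmOn Ω g) :
    SmOn Ω (fun x v => f x v * g x v) := fun n => (hf n).mul (hg n)
lemma SmOn.neg (hf : SmOn Ω f) : SmOn Ω (fun x v => -(f x v)) := fun n => (hf n).neg
lemma smOn_sum {ι : Type*} {s : Finset ι} {A : ι → Vec m → Vec m → ℝ}
    (h : ∀ k ∈ s, SmOn Ω (A k)) : SmOn Ω (fun x v => ∑ k ∈ s, A k x v) := fun n => by
  exact ContDiffOn.sum (fun k hk => h k hk n)
lemma SmOn.cmul (c : ℝ) (hf : SmOn Ω f) : SmOn Ω (fun x v => c * f x v) :=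
  smOn_const.mul hf

-- pdv arithmetic
lemma pdv_add (hΩ : IsOpen Ω) (hf : SmOn Ω f) (hg : SmOn Ω g) (hp : (x, v) ∈ Ω) :
    pdv (fun x v => f x v + g x v) i x v = pdv f i x v + pdv g i x v := by
  unfold pdv
  rw [show ((fun x v => f x v + g x v) x) = (fun w => f x w + g x w) from rfl,
    fderiv_fun_add (hf.diffV hΩ hp) (hg.diffV hΩ hp)]
  rfl

lemma pdv_sub (hΩ : IsOpen Ω) (hf : SmOn Ω f) (hg : SmOn Ω g) (hp : (x, v) ∈ Ω) :
    pdv (fun x v => f x v - g x v) i x v = pdv f i x v - pdv g i x v := by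
  unfold pdv
  rw [show ((fun x v => f x v - g x v) x) = (fun w => f x w - g x w) from rfl,
    fderiv_fun_sub (hf.diffV hΩ hp) (hg.diffV hΩ hp)]
  rfl

lemma pdv_mul (hΩ : IsOpen Ω) (hf : SmOn Ω f) (hg : SmOn Ω g) (hp : (x, v) ∈ Ω) :
    pdv (fun x v => f x v * g x v) i x v
      = f x v * pdv g i x v + g x v * pdv f i x v := by
  unfold pdv
  rw [show ((fun x v => f x v * g x v) x) = (fun w => f x w * g x w) from rfl,
    fderiv_fun_mul (hf.diffV hΩ hp) (hg.diffV hΩ hp)]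
  simp [smul_eq_mul]

lemma pdv_sum (hΩ : IsOpen Ω) {ι : Type*} {s : Finset ι} {A : ι → Vec m → Vec m → ℝ}
    (h : ∀ k ∈ s, SmOn Ω (A k)) (hp : (x, v) ∈ Ω) :
    pdv (fun x v => ∑ k ∈ s, A k x v) i x v = ∑ k ∈ s, pdv (A k) i x v := by
  unfold pdv
  rw [show ((fun x v => ∑ k ∈ s, A k x v) x) = (fun w => ∑ k ∈ s, A k x w) from rfl,
    fderiv_fun_sum (fun k hk => (h k hk).diffV hΩ hp)]
  rw [ContinuousLinearMap.sum_apply]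

lemma pdv_cmul (hΩ : IsOpen Ω) (c : ℝ) (hf : SmOn Ω f) (hp : (x, v) ∈ Ω) :
    pdv (fun x v => c * f x v) i x v = c * pdv f i x v := by
  unfold pdv
  rw [show ((fun x v => c * f x v) x) = (fun w => c * f x w) from rfl,
    fderiv_const_mul (hf.diffV hΩ hp)]
  rfl

lemma pdv_coordv (j i : Fin m) : pdv (fun _ v => v j) i x v = if j = i then 1 else 0 := by
  unfold pdv
  rw [show ((fun (_ : Vec m) (v : Vec m) => v j) x) = fun w : Vec m => (ContinuousLinearMap.proj (R := ℝ) (φ := fun _ : Fin m => ℝ) j) w from rfl]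
  rw [(ContinuousLinearMap.proj (R := ℝ) (φ := fun _ : Fin m => ℝ) j).fderiv]
  simp [Pi.single_apply]

lemma pdv_constfun (c : ℝ) : pdv (fun _ _ => c) i x v = 0 := by
  simp [pdv]

-- pdx arithmetic
lemma pdx_sum (hΩ : IsOpen Ω) {ι : Type*} {s : Finset ι} {A : ι → Vec m → Vec m → ℝ}
    (h : ∀ k ∈ s, SmOn Ω (A k)) (hp : (x, v) ∈ Ω) :
    pdx (fun x v => ∑ k ∈ s, A k x v) i x v = ∑ k ∈ s, pdx (A k) i x v := by
  unfold pdx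
  rw [show (fun y => ∑ k ∈ s, A k y v) = (fun y => ∑ k ∈ s, A k y v) from rfl,
    fderiv_fun_sum (fun k hk => (h k hk).diffX hΩ hp)]
  rw [ContinuousLinearMap.sum_apply]

lemma pdx_vmul (hΩ : IsOpen Ω) (h : Vec m → ℝ) (hf : SmOn Ω f) (hp : (x, v) ∈ Ω) :
    pdx (fun x v => h v * f x v) i x v = h v * pdx f i x v := by
  unfold pdx
  rw [show (fun y => h v * f y v) = (fun y => h v * f y v) from rfl,
    fderiv_const_mul (hf.diffX hΩ hp)]
  rfl

lemma pdx_coordv (j i : Fin m) : pdx (fun _ v => v j) i x v = 0 := by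
  simp [pdx]

lemma pdx_cmul (hΩ : IsOpen Ω) (c : ℝ) (hf : SmOn Ω f) (hp : (x, v) ∈ Ω) :
    pdx (fun x v => c * f x v) i x v = c * pdx f i x v := by
  unfold pdx
  rw [fderiv_const_mul (hf.diffX hΩ hp)]
  rfl

def HomOn (Ω : Set (Vec m × Vec m)) (k : ℤ) (f : Vec m → Vec m → ℝ) : Prop :=
  ∀ p ∈ Ω, ∀ s : ℝ, 0 < s → f p.1 (s • p.2) = s ^ k * f p.1 p.2

lemma homOn_const {c : ℝ} : HomOn Ω 0 (fun _ _ => c) := by intro p _ s _; simp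

lemma homOn_coordv (j : Fin m) : HomOn Ω 1 (fun _ v => v j) := by
  intro p _ s _; simp [Pi.smul_apply, smul_eq_mul]

lemma HomOn.add (hf : HomOn Ω k f) (hg : HomOn Ω k g) :
    HomOn Ω k (fun x v => f x v + g x v) := by
  intro p hp s hs; simp only [hf p hp s hs, hg p hp s hs]; ring

lemma HomOn.sub (hf : HomOn Ω k f) (hg : HomOn Ω k g) :
    HomOn Ω k (fun x v => f x v - g x v) := by
  intro p hp s hs; simp only [hf p hp s hs, hg p hp s hs]; ring

lemma HomOn.mul (hf : HomOn Ω k f) (hg : HomOn Ω l g) :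
    HomOn Ω (k + l) (fun x v => f x v * g x v) := by
  intro p hp s hs
  simp only [hf p hp s hs, hg p hp s hs, zpow_add₀ (ne_of_gt hs)]; ring

lemma HomOn.cmul (c : ℝ) (hf : HomOn Ω k f) : HomOn Ω k (fun x v => c * f x v) := by
  intro p hp s hs; simp only [hf p hp s hs]; ring

lemma homOn_sum {ι : Type*} {s : Finset ι} {A : ι → Vec m → Vec m → ℝ}
    (h : ∀ a ∈ s, HomOn Ω k (A a)) : HomOn Ω k (fun x v => ∑ a ∈ s, A a x v) := by
  intro p hp t ht
  rw [Finset.mul_sum]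
  exact Finset.sum_congr rfl fun a ha => h a ha p hp t ht

lemma HomOn.pdx (hΩ : IsOpen Ω) (hf : SmOn Ω f) (hh : HomOn Ω k f) :
    HomOn Ω k (_root_.pdx f i) := by
  rintro ⟨x, v⟩ hp s hs
  have hU : IsOpen {y : Vec m | (y, v) ∈ Ω} := hΩ.preimage (continuous_id.prodMk continuous_const)
  have he : (fun y => f y (s • v)) =ᶠ[nhds x] (fun y => s ^ k * f y v) := by
    filter_upwards [hU.mem_nhds hp] with y hy using hh (y, v) hy s hs
  show _root_.pdx f i x (s • v) = s ^ k * _root_.pdx f i x v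
  unfold _root_.pdx
  rw [he.fderiv_eq, fderiv_const_mul (hf.diffX hΩ hp)]
  rfl

lemma HomOn.pdv (hΩ : IsOpen Ω) (hcone : ∀ p ∈ Ω, ∀ s : ℝ, 0 < s → (p.1, s • p.2) ∈ Ω)
    (hf : SmOn Ω f) (hh : HomOn Ω k f) : HomOn Ω (k - 1) (_root_.pdv f i) := by
  rintro ⟨x, v⟩ hp s hs
  have hs0 : s ≠ 0 := ne_of_gt hs
  have hU : IsOpen {w : Vec m | (x, w) ∈ Ω} := hΩ.preimage (Continuous.prodMk_right x)
  have he : (fun w => f x (s • w)) =ᶠ[nhds v] (fun w => s ^ k * f x w) := by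
    filter_upwards [hU.mem_nhds hp] with w hw using hh (x, w) hw s hs
  have hmem : (x, s • v) ∈ Ω := hcone (x, v) hp s hs
  have hchain : HasFDerivAt (fun w => f x (s • w))
      ((fderiv ℝ (f x) (s • v)).comp (s • ContinuousLinearMap.id ℝ (Vec m))) v := by
    have h2 : HasFDerivAt (fun w : Vec m => s • w) (s • ContinuousLinearMap.id ℝ (Vec m)) v :=
      (hasFDerivAt_id v).const_smul s
    exact ((hf.diffV hΩ hmem).hasFDerivAt).comp v h2
  have key : s * _root_.pdv f i x (s • v) = s ^ k * _root_.pdv f i x v := by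
    have e1 : fderiv ℝ (fun w => f x (s • w)) v (Pi.single i 1)
        = s * _root_.pdv f i x (s • v) := by
      rw [hchain.fderiv]
      simp only [ContinuousLinearMap.coe_comp', Function.comp_apply,
        ContinuousLinearMap.smul_apply, ContinuousLinearMap.coe_id', id_eq]
      rw [_root_.pdv, (fderiv ℝ (f x) (s • v)).map_smul]
      simp [smul_eq_mul]
    have e2 : fderiv ℝ (fun w => f x (s • w)) v (Pi.single i 1)
        = s ^ k * _root_.pdv f i x v := by
      rw [he.fderiv_eq, fderiv_const_mul (hf.diffV hΩ hp)]
      rfl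
    rw [← e1, e2]
  show _root_.pdv f i x (s • v) = s ^ (k - 1) * _root_.pdv f i x v
  have : _root_.pdv f i x (s • v) = s⁻¹ * (s * _root_.pdv f i x (s • v)) := by
    field_simp
  rw [this, key, zpow_sub_one₀ hs0]
  ring

lemma single_sum (v : Vec m) : ∑ i, v i • (Pi.single i 1 : Vec m) = v := by
  have h1 : ∀ i : Fin m, v i • (Pi.single i 1 : Vec m) = Pi.single i (v i) := by
    intro i; ext j; by_cases h : j = i <;> simp [Pi.single_apply, h]
  simp only [h1]
  exact Finset.univ_sum_single v

lemma euler (hΩ : IsOpen Ω) (hf : SmOn Ω f) (hh : HomOn Ω k f) (hp : (x, v) ∈ Ω) :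
    ∑ i, v i * pdv f i x v = (k : ℝ) * f x v := by
  have hdv := hf.diffV hΩ hp
  have hder : HasDerivAt (fun s : ℝ => f x (s • v)) (fderiv ℝ (f x) v v) 1 := by
    have h2 : HasDerivAt (fun s : ℝ => s • v) v 1 := by
      simpa using (hasDerivAt_id (1:ℝ)).smul_const v
    have hfd : HasFDerivAt (f x) (fderiv ℝ (f x) v) ((1:ℝ) • v) := by
      rw [one_smul]; exact hdv.hasFDerivAt
    simpa [Function.comp_def] using hfd.comp_hasDerivAt 1 h2
  have heq : (fun s : ℝ => f x (s • v)) =ᶠ[nhds 1] (fun s : ℝ => s ^ k * f x v) := by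
    filter_upwards [isOpen_Ioi.mem_nhds (zero_lt_one)] with s hs
    exact hh (x, v) hp s hs
  have hder2 : HasDerivAt (fun s : ℝ => s ^ k * f x v) ((k : ℝ) * f x v) 1 := by
    have := (hasDerivAt_zpow k (1:ℝ) (Or.inl one_ne_zero)).mul_const (f x v)
    simpa using this
  have hder3 : HasDerivAt (fun s : ℝ => f x (s • v)) ((k : ℝ) * f x v) 1 :=
    hder2.congr_of_eventuallyEq heq
  have huniq : fderiv ℝ (f x) v v = (k : ℝ) * f x v := by
    rw [hder.unique hder3]
  calc ∑ i, v i * pdv f i x v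
      = fderiv ℝ (f x) v (∑ i, v i • (Pi.single i 1 : Vec m)) := by
        rw [map_sum]
        refine Finset.sum_congr rfl fun i _ => ?_
        rw [ContinuousLinearMap.map_smul, smul_eq_mul]
        rfl
    _ = (k:ℝ) * f x v := by rw [single_sum v, huniq]

variable {L : Vec m → Vec m → ℝ}

lemma smOn_prod {ι : Type*} {s : Finset ι} {A : ι → Vec m → Vec m → ℝ}
    (h : ∀ k ∈ s, SmOn Ω (A k)) : SmOn Ω (fun x v => ∏ k ∈ s, A k x v) := by
  classical
  induction s using Finset.cons_induction with
  | empty => simpa using (smOn_const (c := 1))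
  | cons a s ha ih =>
    have h1 : SmOn Ω (fun x v => A a x v * ∏ k ∈ s, A k x v) :=
      (h a (Finset.mem_cons_self a s)).mul (ih fun k hk => h k (Finset.mem_cons_of_mem hk))
    have : (fun x v => ∏ k ∈ Finset.cons a s ha, A k x v)
        = fun x v => A a x v * ∏ k ∈ s, A k x v := by
      funext x v; rw [Finset.prod_cons]
    rw [this]; exact h1

lemma smOn_det {M : Vec m → Vec m → Matrix (Fin m) (Fin m) ℝ}
    (h : ∀ a b, SmOn Ω (fun x v => M x v a b)) :
    SmOn Ω (fun x v => (M x v).det) := by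
  have : (fun x v => (M x v).det)
      = fun x v => ∑ σ : Equiv.Perm (Fin m),
          ((Equiv.Perm.sign σ : ℤ) : ℝ) * ∏ i, M x v (σ i) i := by
    funext x v; rw [Matrix.det_apply']
  rw [this]
  exact smOn_sum fun σ _ => SmOn.cmul _ (smOn_prod fun i _ => h (σ i) i)

lemma smOn_gmet (hL : SmOn Ω L) (hΩ : IsOpen Ω) (a b : Fin m) :
    SmOn Ω (fun x v => gmet L x v a b) :=
  (hL.pdv (i := b) hΩ).pdv hΩ

lemma smOn_inv (hf : SmOn Ω f) (h0 : ∀ p ∈ Ω, f p.1 p.2 ≠ 0) :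
    SmOn Ω (fun x v => (f x v)⁻¹) := fun n => (hf n).inv h0

lemma smOn_ginv (hL : SmOn Ω L) (hΩ : IsOpen Ω)
    (hdet : ∀ p ∈ Ω, IsUnit (gmet L p.1 p.2).det) (a b : Fin m) :
    SmOn Ω (fun x v => ginv L x v a b) := by
  have hadj : ∀ i j : Fin m, SmOn Ω (fun x v => (gmet L x v).adjugate i j) := by
    intro i j
    have : (fun x v => (gmet L x v).adjugate i j)
        = fun x v => ((gmet L x v).updateRow j (Pi.single i 1)).det := by
      funext x v; rw [Matrix.adjugate_apply]
    rw [this]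
    apply smOn_det
    intro a' b'
    by_cases h : a' = j
    · have : (fun x v => (gmet L x v).updateRow j (Pi.single i 1) a' b')
          = fun _ _ => (Pi.single i 1 : Vec m) b' := by
        funext x v; rw [Matrix.updateRow_apply, if_pos h]
      rw [this]; exact smOn_const
    · have : (fun x v => (gmet L x v).updateRow j (Pi.single i 1) a' b')
          = fun x v => gmet L x v a' b' := by
        funext x v; rw [Matrix.updateRow_apply, if_neg h]
      rw [this]; exact smOn_gmet hL hΩ a' b'
  have hd : SmOn Ω (fun x v => ((gmet L x v).det)⁻¹) :=
    smOn_inv (smOn_det (fun a b => smOn_gmet hL hΩ a b)) fun p hp => (hdet p hp).ne_zero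
  have : (fun x v => ginv L x v a b)
      = fun x v => ((gmet L x v).det)⁻¹ * (gmet L x v).adjugate a b := by
    funext x v
    rw [ginv, Matrix.inv_def, Matrix.smul_apply, Ring.inverse_eq_inv', smul_eq_mul]
  rw [this]; exact hd.mul (hadj a b)

lemma smOn_pdxg (hL : SmOn Ω L) (hΩ : IsOpen Ω) (a b c : Fin m) :
    SmOn Ω (pdx (fun y w => gmet L y w a b) c) :=
  SmOn.pdx (smOn_gmet hL hΩ a b) hΩ

lemma smOn_spray (hL : SmOn Ω L) (hΩ : IsOpen Ω)
    (hdet : ∀ p ∈ Ω, IsUnit (gmet L p.1 p.2).det) (α : Fin m) :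
    SmOn Ω (spray L α) := by
  have : spray L α = fun x v => (1/4) * ∑ δ, ginv L x v α δ *
      (∑ β, ∑ γ,
        (pdx (fun y w => gmet L y w δ γ) β x v
          + pdx (fun y w => gmet L y w δ β) γ x v
          - pdx (fun y w => gmet L y w β γ) δ x v) * v β * v γ) := rfl
  rw [this]
  refine SmOn.cmul _ (smOn_sum fun δ _ => (smOn_ginv hL hΩ hdet α δ).mul
    (smOn_sum fun β _ => smOn_sum fun γ _ => ?_))
  exact (((smOn_pdxg hL hΩ δ γ β).add (smOn_pdxg hL hΩ δ β γ)).sub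
      (smOn_pdxg hL hΩ β γ δ)).mul (smOn_coordv β) |>.mul (smOn_coordv γ)

lemma smOn_nConn (hL : SmOn Ω L) (hΩ : IsOpen Ω)
    (hdet : ∀ p ∈ Ω, IsUnit (gmet L p.1 p.2).det) (α μ : Fin m) :
    SmOn Ω (nConn L α μ) :=
  SmOn.pdv (smOn_spray hL hΩ hdet α) hΩ

-- homogeneity layer
lemma homOn_gmet (hΩ : IsOpen Ω) (hcone : ∀ p ∈ Ω, ∀ s : ℝ, 0 < s → (p.1, s • p.2) ∈ Ω)
    (hL : SmOn Ω L) (hhom : HomOn Ω 2 L) (a b : Fin m) :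
    HomOn Ω 0 (fun x v => gmet L x v a b) := by
  have h1 : HomOn Ω 1 (pdv L b) := by
    simpa using HomOn.pdv (i := b) hΩ hcone hL hhom
  have h2 : HomOn Ω 0 (pdv (pdv L b) a) := by
    simpa using HomOn.pdv (i := a) hΩ hcone (hL.pdv hΩ) h1
  exact h2

lemma gmet_scale (hΩ : IsOpen Ω) (hcone : ∀ p ∈ Ω, ∀ s : ℝ, 0 < s → (p.1, s • p.2) ∈ Ω)
    (hL : SmOn Ω L) (hhom : HomOn Ω 2 L) {p : Vec m × Vec m} (hp : p ∈ Ω)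
    {s : ℝ} (hs : 0 < s) : gmet L p.1 (s • p.2) = gmet L p.1 p.2 := by
  ext a b
  have := homOn_gmet hΩ hcone hL hhom a b p hp s hs
  simpa using this

lemma homOn_ginv (hΩ : IsOpen Ω) (hcone : ∀ p ∈ Ω, ∀ s : ℝ, 0 < s → (p.1, s • p.2) ∈ Ω)
    (hL : SmOn Ω L) (hhom : HomOn Ω 2 L) (a b : Fin m) :
    HomOn Ω 0 (fun x v => ginv L x v a b) := by
  intro p hp s hs
  show ginv L p.1 (s • p.2) a b = s ^ (0:ℤ) * ginv L p.1 p.2 a b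
  rw [ginv, ginv, gmet_scale hΩ hcone hL hhom hp hs]
  simp

lemma homOn_pdxg (hΩ : IsOpen Ω) (hcone : ∀ p ∈ Ω, ∀ s : ℝ, 0 < s → (p.1, s • p.2) ∈ Ω)
    (hL : SmOn Ω L) (hhom : HomOn Ω 2 L) (a b c : Fin m) :
    HomOn Ω 0 (pdx (fun y w => gmet L y w a b) c) :=
  HomOn.pdx hΩ (smOn_gmet hL hΩ a b) (homOn_gmet hΩ hcone hL hhom a b)

lemma homOn_spray (hΩ : IsOpen Ω) (hcone : ∀ p ∈ Ω, ∀ s : ℝ, 0 < s → (p.1, s • p.2) ∈ Ω)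
    (hL : SmOn Ω L) (hhom : HomOn Ω 2 L) (α : Fin m) :
    HomOn Ω 2 (spray L α) := by
  rintro ⟨x, v⟩ hp s hs
  have hg : ginv L x (s • v) = ginv L x v := by
    rw [ginv, ginv, gmet_scale hΩ hcone hL hhom hp hs]
  have hD : ∀ a b c : Fin m, pdx (fun y w => gmet L y w a b) c x (s • v)
      = pdx (fun y w => gmet L y w a b) c x v := fun a b c => by
    have := homOn_pdxg hΩ hcone hL hhom a b c (x, v) hp s hs
    simpa using this
  show spray L α x (s • v) = s ^ (2:ℤ) * spray L α x v
  unfold spray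
  rw [hg]
  simp only [hD, Pi.smul_apply, smul_eq_mul]
  have inner : ∀ E : Fin m → Fin m → ℝ,
      (∑ β, ∑ γ, E β γ * (s * v β) * (s * v γ))
        = (s * s) * ∑ β, ∑ γ, E β γ * v β * v γ := by
    intro E
    rw [Finset.mul_sum]
    refine Finset.sum_congr rfl fun β _ => ?_
    rw [Finset.mul_sum]
    exact Finset.sum_congr rfl fun γ _ => by ring
  have step : ∀ δ : Fin m, ginv L x v α δ *
      (∑ β, ∑ γ,
        (pdx (fun y w => gmet L y w δ γ) β x v
          + pdx (fun y w => gmet L y w δ β) γ x v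
          - pdx (fun y w => gmet L y w β γ) δ x v) * (s * v β) * (s * v γ))
      = (s * s) * (ginv L x v α δ *
      (∑ β, ∑ γ,
        (pdx (fun y w => gmet L y w δ γ) β x v
          + pdx (fun y w => gmet L y w δ β) γ x v
          - pdx (fun y w => gmet L y w β γ) δ x v) * v β * v γ)) := by
    intro δ
    rw [inner]
    ring
  rw [show (s:ℝ) ^ (2:ℤ) = s * s by rw [zpow_two]]
  calc (1/4) * ∑ δ, ginv L x v α δ *
      (∑ β, ∑ γ,
        (pdx (fun y w => gmet L y w δ γ) β x v
          + pdx (fun y w => gmet L y w δ β) γ x v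
          - pdx (fun y w => gmet L y w β γ) δ x v) * (s * v β) * (s * v γ))
      = (1/4) * ∑ δ, (s * s) * (ginv L x v α δ *
      (∑ β, ∑ γ,
        (pdx (fun y w => gmet L y w δ γ) β x v
          + pdx (fun y w => gmet L y w δ β) γ x v
          - pdx (fun y w => gmet L y w β γ) δ x v) * v β * v γ)) := by
        rw [Finset.sum_congr rfl fun δ _ => step δ]
    _ = s * s * ((1/4) * ∑ δ, ginv L x v α δ *
      (∑ β, ∑ γ,
        (pdx (fun y w => gmet L y w δ γ) β x v
          + pdx (fun y w => gmet L y w δ β) γ x v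
          - pdx (fun y w => gmet L y w β γ) δ x v) * v β * v γ)) := by
        rw [← Finset.mul_sum]
        ring

lemma homOn_nConn (hΩ : IsOpen Ω) (hcone : ∀ p ∈ Ω, ∀ s : ℝ, 0 < s → (p.1, s • p.2) ∈ Ω)
    (hL : SmOn Ω L)
    (hdet : ∀ p ∈ Ω, IsUnit (gmet L p.1 p.2).det)
    (hhom : HomOn Ω 2 L) (α μ : Fin m) :
    HomOn Ω 1 (nConn L α μ) := by
  have := HomOn.pdv (i := μ) hΩ hcone (smOn_spray hL hΩ hdet α)
    (homOn_spray hΩ hcone hL hhom α)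
  show HomOn Ω 1 (pdv (spray L α) μ)
  simpa using this


-- ### derived-object smoothness / homogeneity
lemma smOn_hderiv {N : Fin m → Fin m → Vec m → Vec m → ℝ} (hΩ : IsOpen Ω)
    (hN : ∀ a b, SmOn Ω (N a b)) (hf : SmOn Ω f) (μ : Fin m) :
    SmOn Ω (hderiv N f μ) := by
  have : hderiv N f μ = fun x v => pdx f μ x v - ∑ ν, N ν μ x v * pdv f ν x v := rfl
  rw [this]
  exact (hf.pdx hΩ).sub (smOn_sum fun ν _ => (hN ν μ).mul (hf.pdv hΩ))

lemma smOn_curv {N : Fin m → Fin m → Vec m → Vec m → ℝ} (hΩ : IsOpen Ω)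
    (hN : ∀ a b, SmOn Ω (N a b)) (a b c : Fin m) :
    SmOn Ω (curv N a b c) := by
  have : curv N a b c = fun x v => hderiv N (N a c) b x v - hderiv N (N a b) c x v := rfl
  rw [this]
  exact (smOn_hderiv hΩ hN (hN a c) b).sub (smOn_hderiv hΩ hN (hN a b) c)

lemma smOn_ricciOne {N : Fin m → Fin m → Vec m → Vec m → ℝ} (hΩ : IsOpen Ω)
    (hN : ∀ a b, SmOn Ω (N a b)) (b : Fin m) :
    SmOn Ω (ricciOne N b) := by
  have : ricciOne N b = fun x v => ∑ a, curv N a a b x v := rfl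
  rw [this]
  exact smOn_sum fun a _ => smOn_curv hΩ hN a a b

lemma homOn_hderiv {N : Fin m → Fin m → Vec m → Vec m → ℝ} (hΩ : IsOpen Ω)
    (hcone : ∀ p ∈ Ω, ∀ s : ℝ, 0 < s → (p.1, s • p.2) ∈ Ω)
    (hN : ∀ a b, SmOn Ω (N a b)) (hNh : ∀ a b, HomOn Ω 1 (N a b))
    (hf : SmOn Ω f) (hfh : HomOn Ω 1 f) (μ : Fin m) :
    HomOn Ω 1 (hderiv N f μ) := by
  have : hderiv N f μ = fun x v => pdx f μ x v - ∑ ν, N ν μ x v * pdv f ν x v := rfl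
  rw [this]
  refine HomOn.sub (HomOn.pdx hΩ hf hfh) ?_
  refine homOn_sum fun ν _ => ?_
  have := (hNh ν μ).mul (k := 1) (l := 0) (g := _root_.pdv f ν)
    (by simpa using HomOn.pdv (i := ν) hΩ hcone hf hfh)
  simpa using this

lemma homOn_ricciOne {N : Fin m → Fin m → Vec m → Vec m → ℝ} (hΩ : IsOpen Ω)
    (hcone : ∀ p ∈ Ω, ∀ s : ℝ, 0 < s → (p.1, s • p.2) ∈ Ω)
    (hN : ∀ a b, SmOn Ω (N a b)) (hNh : ∀ a b, HomOn Ω 1 (N a b)) (b : Fin m) :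
    HomOn Ω 1 (ricciOne N b) := by
  have : ricciOne N b = fun x v => ∑ a, curv N a a b x v := rfl
  rw [this]
  refine homOn_sum fun a _ => ?_
  have : curv N a a b = fun x v => hderiv N (N a b) a x v - hderiv N (N a a) b x v := rfl
  rw [this]
  exact (homOn_hderiv hΩ hcone hN hNh (hN a b) (hNh a b) a).sub
    (homOn_hderiv hΩ hcone hN hNh (hN a a) (hNh a a) b)

-- ### metric contraction facts
lemma gmet_sym3 (hΩ : IsOpen Ω) (hL : SmOn Ω L) (hp : (x, v) ∈ Ω) (ν β μ : Fin m) :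
    pdv (fun x v => gmet L x v ν β) μ x v = pdv (fun x v => gmet L x v ν μ) β x v := by
  show pdv (pdv (pdv L β) ν) μ x v = pdv (pdv (pdv L μ) ν) β x v
  calc pdv (pdv (pdv L β) ν) μ x v
      = pdv (pdv (pdv L ν) β) μ x v :=
        pdv_congr hΩ (fun q hq => pdv_pdv_comm hL hΩ (x := q.1) (v := q.2) hq) hp
    _ = pdv (pdv (pdv L ν) μ) β x v := pdv_pdv_comm (hL.pdv hΩ) hΩ hp
    _ = pdv (pdv (pdv L μ) ν) β x v :=
        pdv_congr hΩ (fun q hq => pdv_pdv_comm hL hΩ (x := q.1) (v := q.2) hq) hp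

lemma ginv_gmet (hdet : ∀ p ∈ Ω, IsUnit (gmet L p.1 p.2).det) (hp : (x, v) ∈ Ω)
    (μ β : Fin m) :
    ∑ ν, ginv L x v μ ν * gmet L x v ν β = if μ = β then 1 else 0 := by
  have h1 : ginv L x v * gmet L x v = 1 := Matrix.nonsing_inv_mul _ (hdet (x, v) hp)
  have h2 := congrArg (fun M : Matrix (Fin m) (Fin m) ℝ => M μ β) h1
  simpa [Matrix.mul_apply, Matrix.one_apply] using h2

-- the function (g v)_ν
lemma smOn_gv (hL : SmOn Ω L) (hΩ : IsOpen Ω) (ν : Fin m) :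
    SmOn Ω (fun x v => ∑ β, gmet L x v ν β * v β) :=
  smOn_sum fun β _ => (smOn_gmet hL hΩ ν β).mul (smOn_coordv β)

lemma homOn_gv (hΩ : IsOpen Ω) (hcone : ∀ p ∈ Ω, ∀ s : ℝ, 0 < s → (p.1, s • p.2) ∈ Ω)
    (hL : SmOn Ω L) (hhom : HomOn Ω 2 L) (ν : Fin m) :
    HomOn Ω 1 (fun x v => ∑ β, gmet L x v ν β * v β) := by
  refine homOn_sum fun β _ => ?_
  have := (homOn_gmet hΩ hcone hL hhom ν β).mul (k := 0) (l := 1) (homOn_coordv β)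
  simpa using this

lemma pdv_gv (hΩ : IsOpen Ω) (hcone : ∀ p ∈ Ω, ∀ s : ℝ, 0 < s → (p.1, s • p.2) ∈ Ω)
    (hL : SmOn Ω L) (hhom : HomOn Ω 2 L) (hp : (x, v) ∈ Ω) (ν μ : Fin m) :
    pdv (fun x v => ∑ β, gmet L x v ν β * v β) μ x v = gmet L x v ν μ := by
  rw [pdv_sum hΩ (fun β _ => (smOn_gmet hL hΩ ν β).mul (smOn_coordv β)) hp]
  have hterm : ∀ β : Fin m, pdv (fun x v => gmet L x v ν β * v β) μ x v
      = gmet L x v ν β * (if β = μ then 1 else 0) + v β * pdv (fun x v => gmet L x v ν β) μ x v := by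
    intro β
    rw [pdv_mul hΩ (smOn_gmet hL hΩ ν β) (smOn_coordv β) hp, pdv_coordv]
  simp only [hterm]
  rw [Finset.sum_add_distrib]
  have e1 : ∑ β, gmet L x v ν β * (if β = μ then 1 else 0) = gmet L x v ν μ := by
    rw [Finset.sum_congr rfl (fun β _ => by rw [mul_ite, mul_one, mul_zero])]
    simp
  have e2 : ∑ β, v β * pdv (fun x v => gmet L x v ν β) μ x v = 0 := by
    have : ∀ β : Fin m, v β * pdv (fun x v => gmet L x v ν β) μ x v
        = v β * pdv (fun x v => gmet L x v ν μ) β x v := fun β => by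
      rw [gmet_sym3 hΩ hL hp]
    rw [Finset.sum_congr rfl fun β _ => this β]
    have := euler (k := 0) hΩ (smOn_gmet hL hΩ ν μ) (homOn_gmet hΩ hcone hL hhom ν μ) hp
    simpa using this
  rw [e1, e2, add_zero]

-- ### Part 1
theorem part1 (hm : 3 ≤ m)
    (hΩ : IsOpen Ω)
    (hcone : ∀ p ∈ Ω, ∀ s : ℝ, 0 < s → (p.1, s • p.2) ∈ Ω)
    (hL : SmOn Ω L) (hhom : HomOn Ω 2 L)
    (hdet : ∀ p ∈ Ω, IsUnit (gmet L p.1 p.2).det) :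
    ((∀ p ∈ Ω, ∀ α,
          ricciOne (nConn L) α p.1 p.2
            - (1/2) * (∑ μ, ∑ ν, ginv L p.1 p.2 μ ν
                * pdv (ricciOne (nConn L) ν) μ p.1 p.2)
              * (∑ β, gmet L p.1 p.2 α β * p.2 β) = 0)
        ↔ (∀ p ∈ Ω, ∀ α, ricciOne (nConn L) α p.1 p.2 = 0)) := by
  set N := nConn L with hNdef
  have hN : ∀ a b, SmOn Ω (N a b) := fun a b => smOn_nConn hL hΩ hdet a b
  have hNh : ∀ a b, HomOn Ω 1 (N a b) := fun a b => homOn_nConn hΩ hcone hL hdet hhom a b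
  have hR : ∀ b, SmOn Ω (ricciOne N b) := fun b => smOn_ricciOne hΩ hN b
  have hRh : ∀ b, HomOn Ω 1 (ricciOne N b) := fun b => homOn_ricciOne hΩ hcone hN hNh b
  constructor
  · -- vacuum equation → Ricci one-form vanishes
    intro ha
    -- the scalar function c
    set cF : Vec m → Vec m → ℝ := fun x v =>
      (1/2) * ∑ μ, ∑ ν, ginv L x v μ ν * pdv (ricciOne N ν) μ x v with hcF
    have hcS : SmOn Ω cF :=
      SmOn.cmul _ (smOn_sum fun μ _ => smOn_sum fun ν _ =>
        (smOn_ginv hL hΩ hdet μ ν).mul ((hR ν).pdv hΩ))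
    have hcH : HomOn Ω 0 cF := by
      refine HomOn.cmul _ (homOn_sum fun μ _ => homOn_sum fun ν _ => ?_)
      have := (homOn_ginv hΩ hcone hL hhom μ ν).mul (k := 0) (l := 0)
        (by simpa using HomOn.pdv (i := μ) hΩ hcone (hR ν) (hRh ν))
      simpa using this
    -- hypothesis as function identity on Ω
    have hfun : ∀ ν : Fin m, ∀ q ∈ Ω, ricciOne N ν q.1 q.2
        = cF q.1 q.2 * (∑ β, gmet L q.1 q.2 ν β * q.2 β) := by
      intro ν q hq
      have := ha q hq ν
      rw [hcF]
      linarith [this]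
    intro p hp α
    obtain ⟨x, v⟩ := p
    -- compute A := ∑ ginv μν ∂̇μ Rν at (x,v)
    have hpdvR : ∀ μ ν : Fin m, pdv (ricciOne N ν) μ x v
        = cF x v * gmet L x v ν μ
          + (∑ β, gmet L x v ν β * v β) * pdv cF μ x v := by
      intro μ ν
      rw [pdv_congr (g := fun x v => cF x v * (∑ β, gmet L x v ν β * v β)) hΩ
        (fun q hq => hfun ν q hq) hp,
        pdv_mul hΩ hcS (smOn_gv hL hΩ ν) hp,
        pdv_gv hΩ hcone hL hhom hp ν μ]
    have hA : (∑ μ, ∑ ν, ginv L x v μ ν * pdv (ricciOne N ν) μ x v)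
        = (m : ℝ) * cF x v := by
      have expand : ∀ μ ν : Fin m, ginv L x v μ ν * pdv (ricciOne N ν) μ x v
          = cF x v * (ginv L x v μ ν * gmet L x v ν μ)
            + pdv cF μ x v * (ginv L x v μ ν * (∑ β, gmet L x v ν β * v β)) := by
        intro μ ν; rw [hpdvR μ ν]; ring
      rw [Finset.sum_congr rfl fun μ _ => Finset.sum_congr rfl fun ν _ => expand μ ν]
      have split : ∀ μ : Fin m, ∑ ν, (cF x v * (ginv L x v μ ν * gmet L x v ν μ)
            + pdv cF μ x v * (ginv L x v μ ν * (∑ β, gmet L x v ν β * v β)))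
          = cF x v * (∑ ν, ginv L x v μ ν * gmet L x v ν μ)
            + pdv cF μ x v * (∑ ν, ginv L x v μ ν * (∑ β, gmet L x v ν β * v β)) := by
        intro μ
        rw [Finset.sum_add_distrib, Finset.mul_sum, Finset.mul_sum]
      rw [Finset.sum_congr rfl fun μ _ => split μ]
      have tr : ∀ μ : Fin m, (∑ ν, ginv L x v μ ν * gmet L x v ν μ) = 1 := by
        intro μ
        have := ginv_gmet hdet hp μ μ
        simpa using this
      have vv : ∀ μ : Fin m, (∑ ν, ginv L x v μ ν * (∑ β, gmet L x v ν β * v β)) = v μ := by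
        intro μ
        have swap : ∑ ν, ginv L x v μ ν * (∑ β, gmet L x v ν β * v β)
            = ∑ β, (∑ ν, ginv L x v μ ν * gmet L x v ν β) * v β := by
          calc ∑ ν, ginv L x v μ ν * (∑ β, gmet L x v ν β * v β)
              = ∑ ν, ∑ β, ginv L x v μ ν * (gmet L x v ν β * v β) :=
                Finset.sum_congr rfl fun ν _ => Finset.mul_sum _ _ _
            _ = ∑ β, ∑ ν, ginv L x v μ ν * (gmet L x v ν β * v β) := Finset.sum_comm
            _ = ∑ β, (∑ ν, ginv L x v μ ν * gmet L x v ν β) * v β := by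
                refine Finset.sum_congr rfl fun β _ => ?_
                rw [Finset.sum_mul]
                exact Finset.sum_congr rfl fun ν _ => by ring
        rw [swap, Finset.sum_congr rfl fun β _ => by rw [ginv_gmet hdet hp μ β]]
        simp
      rw [Finset.sum_congr rfl fun μ _ => by rw [tr μ, vv μ]]
      rw [Finset.sum_add_distrib]
      have e1 : ∑ _μ : Fin m, cF x v * 1 = (m:ℝ) * cF x v := by
        rw [Finset.sum_const]
        simp [mul_comm]
      have e2 : ∑ μ, pdv cF μ x v * v μ = 0 := by
        have := euler (k := 0) hΩ hcS hcH hp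
        simp only [Int.cast_zero, zero_mul] at this
        rw [← this]
        exact Finset.sum_congr rfl fun μ _ => by ring
      rw [e1, e2, add_zero]
    -- 2 c = m c ⇒ c = 0
    have hkey : cF x v = (1/2) * ((m:ℝ) * cF x v) := by
      conv_lhs => rw [hcF]
      rw [← hA]
    have hm' : (3:ℝ) ≤ (m:ℝ) := by exact_mod_cast hm
    have hc0 : cF x v = 0 := by
      have h2 : (2 - (m:ℝ)) * cF x v = 0 := by linarith
      rcases mul_eq_zero.mp h2 with h | h
      · exfalso; linarith
      · exact h
    rw [hfun α (x, v) hp, hc0, zero_mul]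
  · -- Ricci one-form vanishes → vacuum equation
    intro hb p hp α
    obtain ⟨x, v⟩ := p
    have h0 : ∀ μ ν : Fin m, pdv (ricciOne N ν) μ x v = 0 := fun μ ν =>
      pdv_zero_of hΩ (fun q hq => hb q hq ν) hp
    have hs0 : (∑ μ, ∑ ν, ginv L x v μ ν * pdv (ricciOne N ν) μ x v) = 0 := by
      rw [Finset.sum_congr rfl fun μ _ => Finset.sum_congr rfl fun ν _ => by
        rw [h0 μ ν, mul_zero]]
      simp
    rw [hb (x, v) hp α, hs0]
    ring

lemma sum4 {ι : Type*} (s : Finset ι) (w y z u : ι → ℝ) :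
    ∑ i ∈ s, (w i - y i - z i + u i) = ∑ i ∈ s, w i - ∑ i ∈ s, y i - ∑ i ∈ s, z i + ∑ i ∈ s, u i := by
  rw [Finset.sum_add_distrib, Finset.sum_sub_distrib, Finset.sum_sub_distrib]

theorem chi_id (hΩ : IsOpen Ω)
    (hcone : ∀ p ∈ Ω, ∀ s : ℝ, 0 < s → (p.1, s • p.2) ∈ Ω)
    (hL : SmOn Ω L) (hhom : HomOn Ω 2 L)
    (hdet : ∀ p ∈ Ω, IsUnit (gmet L p.1 p.2).det)
    {x v : Vec m} (hp : (x, v) ∈ Ω) (α : Fin m) :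
    chiForm (nConn L) α x v
      = pdv (ricciScalar (nConn L)) α x v - 2 * ricciOne (nConn L) α x v := by
  set N := nConn L with hNdef
  have hG : ∀ a, SmOn Ω (spray L a) := fun a => smOn_spray hL hΩ hdet a
  have hGh : ∀ a, HomOn Ω 2 (spray L a) := fun a => homOn_spray hΩ hcone hL hhom a
  have hN : ∀ a b, SmOn Ω (N a b) := fun a b => (hG a).pdv hΩ
  have hNh : ∀ a b, HomOn Ω 1 (N a b) := fun a b => by
    show HomOn Ω 1 (pdv (spray L a) b)
    simpa using HomOn.pdv (i := b) hΩ hcone (hG a) (hGh a)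
  have hP : ∀ a b c, SmOn Ω (pdv (N a b) c) := fun a b c => (hN a b).pdv hΩ
  have hPh : ∀ a b c, HomOn Ω 0 (pdv (N a b) c) := fun a b c => by
    simpa using HomOn.pdv (i := c) hΩ hcone (hN a b) (hNh a b)
  have hQ : ∀ a b c d, SmOn Ω (pdv (pdv (N a b) c) d) := fun a b c d => (hP a b c).pdv hΩ
  -- Schwarz for N (on Ω)
  have ns : ∀ a b c : Fin m, ∀ q ∈ Ω, pdv (N a b) c q.1 q.2 = pdv (N a c) b q.1 q.2 := by
    intro a b c q hq
    exact pdv_pdv_comm (f := spray L a) (hG a) hΩ (x := q.1) (v := q.2) hq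
  -- Euler identities on Ω
  have e1 : ∀ a : Fin m, ∀ q ∈ Ω, (∑ b, q.2 b * N a b q.1 q.2) = 2 * spray L a q.1 q.2 := by
    intro a q hq
    have := euler (k := 2) hΩ (hG a) (hGh a) (x := q.1) (v := q.2) (by simpa using hq)
    show ∑ b, q.2 b * pdv (spray L a) b q.1 q.2 = _
    simpa using this
  have e2 : ∀ a e : Fin m, ∀ q ∈ Ω, (∑ c, q.2 c * pdv (N a e) c q.1 q.2) = N a e q.1 q.2 := by
    intro a e q hq
    have := euler (k := 1) hΩ (hN a e) (hNh a e) (x := q.1) (v := q.2) (by simpa using hq)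
    simpa using this
  have e2' : ∀ a e : Fin m, ∀ q ∈ Ω, (∑ c, q.2 c * pdv (N a c) e q.1 q.2) = N a e q.1 q.2 := by
    intro a e q hq
    rw [Finset.sum_congr rfl fun c _ => by rw [ns a c e q hq]]
    exact e2 a e q hq
  have e0 : ∀ a e d : Fin m, ∀ q ∈ Ω,
      (∑ c, q.2 c * pdv (pdv (N a e) d) c q.1 q.2) = 0 := by
    intro a e d q hq
    have := euler (k := 0) hΩ (hP a e d) (hPh a e d) (x := q.1) (v := q.2) (by simpa using hq)
    simpa using this
  -- the six atoms at the point (x,v)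
  set a1 : ℝ := ∑ a, pdx (N a α) a x v with ha1
  set a2 : ℝ := ∑ a, pdx (N a a) α x v with ha2
  set g2b : ℝ := ∑ a, ∑ d, pdv (N d a) α x v * N a d x v with hg2b
  set t4 : ℝ := ∑ a, ∑ c, v c * pdx (pdv (N a a) α) c x v with ht4
  set t5 : ℝ := ∑ a, ∑ d, N d α x v * pdv (N a a) d x v with ht5
  set t6 : ℝ := ∑ a, ∑ d, spray L d x v * pdv (pdv (N a a) α) d x v with ht6
  -- killed contractions (used twice)
  have kill : ∀ a e : Fin m, (∑ b, v b * pdv (pdv (N a b) e) α x v) = 0 := by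
    intro a e
    have step : ∀ b : Fin m, pdv (pdv (N a b) e) α x v = pdv (pdv (N a e) α) b x v := by
      intro b
      calc pdv (pdv (N a b) e) α x v
          = pdv (pdv (N a e) b) α x v :=
            pdv_congr hΩ (fun q hq => ns a b e q hq) hp
        _ = pdv (pdv (N a e) α) b x v := pdv_pdv_comm (hN a e) hΩ hp
    rw [Finset.sum_congr rfl fun b _ => by rw [step b]]
    exact e0 a e α (x, v) hp
  have kill2 : ∀ a e : Fin m, (∑ b, v b * pdv (pdv (N a b) e) a x v) = 0 := by
    intro a e
    have step : ∀ b : Fin m, pdv (pdv (N a b) e) a x v = pdv (pdv (N a e) a) b x v := by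
      intro b
      calc pdv (pdv (N a b) e) a x v
          = pdv (pdv (N a e) b) a x v :=
            pdv_congr hΩ (fun q hq => ns a b e q hq) hp
        _ = pdv (pdv (N a e) a) b x v := pdv_pdv_comm (hN a e) hΩ hp
    rw [Finset.sum_congr rfl fun b _ => by rw [step b]]
    exact e0 a e a (x, v) hp
  -- smoothness of ricciOne
  have hRS : ∀ b, SmOn Ω (ricciOne N b) := by
    intro b
    have hshape : ricciOne N b = fun x v => ∑ a,
        ((pdx (N a b) a x v - ∑ d, N d a x v * pdv (N a b) d x v)
          - (pdx (N a a) b x v - ∑ d, N d b x v * pdv (N a a) d x v)) := rfl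
    rw [hshape]
    exact smOn_sum fun a _ =>
      (((hN a b).pdx hΩ).sub (smOn_sum fun d _ => (hN d a).mul (hP a b d))).sub
        (((hN a a).pdx hΩ).sub (smOn_sum fun d _ => (hN d b).mul (hP a a d)))
  -- expansion of the v-derivative of the Ricci one-form
  have expandR : ∀ b : Fin m, pdv (ricciOne N b) α x v
      = ∑ a, (pdx (pdv (N a b) α) a x v
          - (∑ d, (N d a x v * pdv (pdv (N a b) d) α x v
              + pdv (N a b) d x v * pdv (N d a) α x v))
          - pdx (pdv (N a a) α) b x v
          + (∑ d, (N d b x v * pdv (pdv (N a a) d) α x v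
              + pdv (N a a) d x v * pdv (N d b) α x v))) := by
    intro b
    have hshape : ricciOne N b = fun x v => ∑ a,
        ((pdx (N a b) a x v - ∑ d, N d a x v * pdv (N a b) d x v)
          - (pdx (N a a) b x v - ∑ d, N d b x v * pdv (N a a) d x v)) := rfl
    rw [hshape, pdv_sum hΩ (fun a _ =>
      (((hN a b).pdx hΩ).sub (smOn_sum fun d _ => (hN d a).mul (hP a b d))).sub
        (((hN a a).pdx hΩ).sub (smOn_sum fun d _ => (hN d b).mul (hP a a d)))) hp]
    refine Finset.sum_congr rfl fun a _ => ?_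
    rw [pdv_sub hΩ
      (((hN a b).pdx hΩ).sub (smOn_sum fun d _ => (hN d a).mul (hP a b d)))
      (((hN a a).pdx hΩ).sub (smOn_sum fun d _ => (hN d b).mul (hP a a d))) hp,
      pdv_sub hΩ ((hN a b).pdx hΩ) (smOn_sum fun d _ => (hN d a).mul (hP a b d)) hp,
      pdv_sub hΩ ((hN a a).pdx hΩ) (smOn_sum fun d _ => (hN d b).mul (hP a a d)) hp,
      pdv_pdx_comm (hN a b) hΩ hp, pdv_pdx_comm (hN a a) hΩ hp,
      pdv_sum hΩ (fun d _ => (hN d a).mul (hP a b d)) hp,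
      pdv_sum hΩ (fun d _ => (hN d b).mul (hP a a d)) hp]
    rw [Finset.sum_congr rfl fun d _ => pdv_mul hΩ (hN d a) (hP a b d) hp,
      Finset.sum_congr rfl fun d _ => pdv_mul hΩ (hN d b) (hP a a d) hp]
    ring
  -- expansion of the γ-derivative of the curvature
  have expandChi : ∀ a c : Fin m, pdv (curv N a α c) a x v
      = pdx (pdv (N a c) a) α x v
        - (∑ d, (N d α x v * pdv (pdv (N a c) d) a x v
            + pdv (N a c) d x v * pdv (N d α) a x v))
        - pdx (pdv (N a α) a) c x v
        + (∑ d, (N d c x v * pdv (pdv (N a α) d) a x v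
            + pdv (N a α) d x v * pdv (N d c) a x v)) := by
    intro a c
    have hshape : curv N a α c = fun x v =>
        ((pdx (N a c) α x v - ∑ d, N d α x v * pdv (N a c) d x v)
          - (pdx (N a α) c x v - ∑ d, N d c x v * pdv (N a α) d x v)) := rfl
    rw [hshape,
      pdv_sub hΩ
        (((hN a c).pdx hΩ).sub (smOn_sum fun d _ => (hN d α).mul (hP a c d)))
        (((hN a α).pdx hΩ).sub (smOn_sum fun d _ => (hN d c).mul (hP a α d))) hp,
      pdv_sub hΩ ((hN a c).pdx hΩ) (smOn_sum fun d _ => (hN d α).mul (hP a c d)) hp,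
      pdv_sub hΩ ((hN a α).pdx hΩ) (smOn_sum fun d _ => (hN d c).mul (hP a α d)) hp,
      pdv_pdx_comm (hN a c) hΩ hp, pdv_pdx_comm (hN a α) hΩ hp,
      pdv_sum hΩ (fun d _ => (hN d α).mul (hP a c d)) hp,
      pdv_sum hΩ (fun d _ => (hN d c).mul (hP a α d)) hp]
    rw [Finset.sum_congr rfl fun d _ => pdv_mul hΩ (hN d α) (hP a c d) hp,
      Finset.sum_congr rfl fun d _ => pdv_mul hΩ (hN d c) (hP a α d) hp]
    ring
  -- contraction helper: ∑_b v b * pdx (pdv (N a b) α) a = pdx (N a α) a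
  have w1 : ∀ a e j : Fin m, (∑ b, v b * pdx (pdv (N a b) e) j x v) = pdx (N a e) j x v := by
    intro a e j
    have hsm : ∀ b : Fin m, SmOn Ω (fun x v => v b * pdv (N a b) e x v) :=
      fun b => (smOn_coordv b).mul (hP a b e)
    have h1 : pdx (fun x v => ∑ b, v b * pdv (N a b) e x v) j x v
        = ∑ b, v b * pdx (pdv (N a b) e) j x v := by
      rw [pdx_sum hΩ (fun b _ => hsm b) hp]
      exact Finset.sum_congr rfl fun b _ =>
        pdx_vmul hΩ (fun w => w b) (hP a b e) hp
    rw [← h1]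
    exact pdx_congr hΩ (fun q hq => e2' a e q hq) hp
  -- contraction: ∑_b v b * pdv (N a b) d = N a d (at the point)
  have w2 : ∀ a d : Fin m, (∑ b, v b * pdv (N a b) d x v) = N a d x v :=
    fun a d => e2' a d (x, v) hp
  -- contraction: ∑_b v b * N d b = 2 spray d (at the point)
  have w3 : ∀ d : Fin m, (∑ b, v b * N d b x v) = 2 * spray L d x v :=
    fun d => e1 d (x, v) hp
  -- main Ricci-side contraction
  have contract : ∑ b, v b * pdv (ricciOne N b) α x v = a1 - g2b - t4 + 2 * t6 + t5 := by
    rw [Finset.sum_congr rfl fun b (_ : b ∈ Finset.univ) => by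
      rw [expandR b, Finset.mul_sum]]
    rw [Finset.sum_comm]
    have pera : ∀ a : Fin m,
        (∑ b, v b * (pdx (pdv (N a b) α) a x v
          - (∑ d, (N d a x v * pdv (pdv (N a b) d) α x v
              + pdv (N a b) d x v * pdv (N d a) α x v))
          - pdx (pdv (N a a) α) b x v
          + (∑ d, (N d b x v * pdv (pdv (N a a) d) α x v
              + pdv (N a a) d x v * pdv (N d b) α x v))))
        = pdx (N a α) a x v
          - (∑ d, pdv (N d a) α x v * N a d x v)
          - (∑ c, v c * pdx (pdv (N a a) α) c x v)
          + (2 * (∑ d, spray L d x v * pdv (pdv (N a a) α) d x v)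
              + ∑ d, N d α x v * pdv (N a a) d x v) := by
      intro a
      rw [Finset.sum_congr rfl fun b (_ : b ∈ Finset.univ) => (by ring :
        v b * (pdx (pdv (N a b) α) a x v
          - (∑ d, (N d a x v * pdv (pdv (N a b) d) α x v
              + pdv (N a b) d x v * pdv (N d a) α x v))
          - pdx (pdv (N a a) α) b x v
          + (∑ d, (N d b x v * pdv (pdv (N a a) d) α x v
              + pdv (N a a) d x v * pdv (N d b) α x v)))
        = v b * pdx (pdv (N a b) α) a x v
          - v b * (∑ d, (N d a x v * pdv (pdv (N a b) d) α x v
              + pdv (N a b) d x v * pdv (N d a) α x v))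
          - v b * pdx (pdv (N a a) α) b x v
          + v b * (∑ d, (N d b x v * pdv (pdv (N a a) d) α x v
              + pdv (N a a) d x v * pdv (N d b) α x v)))]
      rw [sum4]
      congr 1
      congr 1
      congr 1
      · exact w1 a α a
      · -- second group
        rw [Finset.sum_congr rfl fun b (_ : b ∈ Finset.univ) => Finset.mul_sum _ _ _,
          Finset.sum_comm]
        refine Finset.sum_congr rfl fun d _ => ?_
        rw [Finset.sum_congr rfl fun b (_ : b ∈ Finset.univ) => (by ring :
          v b * (N d a x v * pdv (pdv (N a b) d) α x v
              + pdv (N a b) d x v * pdv (N d a) α x v)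
            = N d a x v * (v b * pdv (pdv (N a b) d) α x v)
              + (v b * pdv (N a b) d x v) * pdv (N d a) α x v)]
        rw [Finset.sum_add_distrib, ← Finset.mul_sum, kill a d, mul_zero, zero_add,
          ← Finset.sum_mul, w2 a d]
        ring
      · -- fourth group
        rw [Finset.sum_congr rfl fun b (_ : b ∈ Finset.univ) => Finset.mul_sum _ _ _,
          Finset.sum_comm]
        rw [Finset.sum_congr rfl fun d (_ : d ∈ Finset.univ) => (by
          rw [Finset.sum_congr rfl fun b (_ : b ∈ Finset.univ) => (by ring :
            v b * (N d b x v * pdv (pdv (N a a) d) α x v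
                + pdv (N a a) d x v * pdv (N d b) α x v)
              = (v b * N d b x v) * pdv (pdv (N a a) d) α x v
                + (v b * pdv (N d b) α x v) * pdv (N a a) d x v)]
          rw [Finset.sum_add_distrib, ← Finset.sum_mul, ← Finset.sum_mul, w3 d, e2' d α (x, v) hp]
          rw [pdv_pdv_comm (hN a a) hΩ hp (i := d) (j := α)] :
          (∑ b, v b * (N d b x v * pdv (pdv (N a a) d) α x v
              + pdv (N a a) d x v * pdv (N d b) α x v))
            = 2 * spray L d x v * pdv (pdv (N a a) α) d x v
              + N d α x v * pdv (N a a) d x v)]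
        rw [Finset.sum_add_distrib]
        congr 1
        rw [Finset.mul_sum]
        exact Finset.sum_congr rfl fun d _ => by ring
    rw [Finset.sum_congr rfl fun a (_ : a ∈ Finset.univ) => pera a]
    rw [sum4, ha1, hg2b, ht4, ht5, ht6, Finset.sum_add_distrib, ← Finset.mul_sum]
    ring
  -- χ-side contraction
  have chiContract : chiForm N α x v
      = a2 - (∑ a, ∑ d, N a d x v * pdv (N d a) α x v) - t4 + 2 * t6
        + (∑ a, ∑ d, N d a x v * pdv (N a d) α x v) := by
    have hshape : chiForm N α x v = ∑ a, ∑ c, pdv (curv N a α c) a x v * v c := rfl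
    rw [hshape]
    have pera : ∀ a : Fin m, (∑ c, pdv (curv N a α c) a x v * v c)
        = pdx (N a a) α x v
          - (∑ d, N a d x v * pdv (N d a) α x v)
          - (∑ c, v c * pdx (pdv (N a a) α) c x v)
          + (2 * (∑ d, spray L d x v * pdv (pdv (N a a) α) d x v)
              + ∑ d, N d a x v * pdv (N a d) α x v) := by
      intro a
      rw [Finset.sum_congr rfl fun c (_ : c ∈ Finset.univ) => by
        rw [expandChi a c,
          (by ring : (pdx (pdv (N a c) a) α x v
          - (∑ d, (N d α x v * pdv (pdv (N a c) d) a x v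
              + pdv (N a c) d x v * pdv (N d α) a x v))
          - pdx (pdv (N a α) a) c x v
          + (∑ d, (N d c x v * pdv (pdv (N a α) d) a x v
              + pdv (N a α) d x v * pdv (N d c) a x v))) * v c
          = v c * pdx (pdv (N a c) a) α x v
            - v c * (∑ d, (N d α x v * pdv (pdv (N a c) d) a x v
                + pdv (N a c) d x v * pdv (N d α) a x v))
            - v c * pdx (pdv (N a α) a) c x v
            + v c * (∑ d, (N d c x v * pdv (pdv (N a α) d) a x v
                + pdv (N a α) d x v * pdv (N d c) a x v)))]]
      rw [sum4]
      congr 1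
      congr 1
      congr 1
      · exact w1 a a α
      · -- H2 group
        rw [Finset.sum_congr rfl fun c (_ : c ∈ Finset.univ) => Finset.mul_sum _ _ _,
          Finset.sum_comm]
        refine Finset.sum_congr rfl fun d _ => ?_
        rw [Finset.sum_congr rfl fun c (_ : c ∈ Finset.univ) => (by ring :
          v c * (N d α x v * pdv (pdv (N a c) d) a x v
              + pdv (N a c) d x v * pdv (N d α) a x v)
            = N d α x v * (v c * pdv (pdv (N a c) d) a x v)
              + (v c * pdv (N a c) d x v) * pdv (N d α) a x v)]
        rw [Finset.sum_add_distrib, ← Finset.mul_sum, kill2 a d, mul_zero, zero_add,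
          ← Finset.sum_mul, w2 a d]
        rw [ns d α a (x, v) hp]
      · -- H3 group
        refine Finset.sum_congr rfl fun c _ => ?_
        rw [pdx_congr (f := pdv (N a α) a) (g := pdv (N a a) α) hΩ
          (fun q hq => ns a α a q hq) hp]
      · -- H4 group
        rw [Finset.sum_congr rfl fun c (_ : c ∈ Finset.univ) => Finset.mul_sum _ _ _,
          Finset.sum_comm]
        rw [Finset.sum_congr rfl fun d (_ : d ∈ Finset.univ) => (by
          rw [Finset.sum_congr rfl fun c (_ : c ∈ Finset.univ) => (by ring :
            v c * (N d c x v * pdv (pdv (N a α) d) a x v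
                + pdv (N a α) d x v * pdv (N d c) a x v)
              = (v c * N d c x v) * pdv (pdv (N a α) d) a x v
                + (v c * pdv (N d c) a x v) * pdv (N a α) d x v)]
          rw [Finset.sum_add_distrib, ← Finset.sum_mul, ← Finset.sum_mul, w3 d,
            e2' d a (x, v) hp]
          rw [(by
            calc pdv (pdv (N a α) d) a x v
                = pdv (pdv (N a α) a) d x v := pdv_pdv_comm (hN a α) hΩ hp
              _ = pdv (pdv (N a a) α) d x v :=
                  pdv_congr hΩ (fun q hq => ns a α a q hq) hp :
            pdv (pdv (N a α) d) a x v = pdv (pdv (N a a) α) d x v),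
            ns a α d (x, v) hp] :
          (∑ c, v c * (N d c x v * pdv (pdv (N a α) d) a x v
              + pdv (N a α) d x v * pdv (N d c) a x v))
            = 2 * spray L d x v * pdv (pdv (N a a) α) d x v
              + N d a x v * pdv (N a d) α x v)]
        rw [Finset.sum_add_distrib]
        congr 1
        rw [Finset.mul_sum]
        exact Finset.sum_congr rfl fun d _ => by ring
    rw [Finset.sum_congr rfl fun a (_ : a ∈ Finset.univ) => pera a]
    rw [sum4, ha2, ht4, ht6, Finset.sum_add_distrib, ← Finset.mul_sum]
    ring
  -- expansion of the Ricci one-form itself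
  have hRexp : ricciOne N α x v = a1 - g2b - a2 + t5 := by
    have hshape : ricciOne N α x v = ∑ a,
        ((pdx (N a α) a x v - ∑ d, N d a x v * pdv (N a α) d x v)
          - (pdx (N a a) α x v - ∑ d, N d α x v * pdv (N a a) d x v)) := rfl
    rw [hshape]
    rw [Finset.sum_congr rfl fun a (_ : a ∈ Finset.univ) => (by
      rw [Finset.sum_congr rfl fun d (_ : d ∈ Finset.univ) => by
        rw [ns a α d (x, v) hp]]
      ring :
      ((pdx (N a α) a x v - ∑ d, N d a x v * pdv (N a α) d x v)
        - (pdx (N a a) α x v - ∑ d, N d α x v * pdv (N a a) d x v))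
      = pdx (N a α) a x v - (∑ d, N d a x v * pdv (N a d) α x v)
        - pdx (N a a) α x v + ∑ d, N d α x v * pdv (N a a) d x v)]
    rw [sum4, ha1, ha2, ht5, hg2b]
    have swap : (∑ a, ∑ d, N d a x v * pdv (N a d) α x v)
        = ∑ a, ∑ d, pdv (N d a) α x v * N a d x v := by
      rw [Finset.sum_comm]
      exact Finset.sum_congr rfl fun a _ => Finset.sum_congr rfl fun d _ => by ring
    rw [swap]
  -- derivative of the Ricci scalar
  have hRicD : pdv (ricciScalar N) α x v
      = ricciOne N α x v + ∑ b, v b * pdv (ricciOne N b) α x v := by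
    have hshape : ricciScalar N = fun x v => ∑ b, ricciOne N b x v * v b := rfl
    rw [hshape, pdv_sum hΩ (fun b _ => (hRS b).mul (smOn_coordv b)) hp]
    rw [Finset.sum_congr rfl fun b (_ : b ∈ Finset.univ) => by
      rw [pdv_mul hΩ (hRS b) (smOn_coordv b) hp, pdv_coordv]]
    rw [Finset.sum_add_distrib]
    congr 1
    rw [Finset.sum_congr rfl fun b (_ : b ∈ Finset.univ) => (by
      rw [mul_ite, mul_one, mul_zero] :
      ricciOne N b x v * (if b = α then 1 else 0)
        = if b = α then ricciOne N b x v else 0)]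
    simp
  -- final assembly
  have cancel : (∑ a, ∑ d, N d a x v * pdv (N a d) α x v)
      = ∑ a, ∑ d, N a d x v * pdv (N d a) α x v := Finset.sum_comm
  rw [chiContract, hRicD, contract, hRexp, cancel, hg2b]
  have swap2 : (∑ a, ∑ d, pdv (N d a) α x v * N a d x v)
      = ∑ a, ∑ d, N a d x v * pdv (N d a) α x v :=
    Finset.sum_congr rfl fun a _ => Finset.sum_congr rfl fun d _ => by ring
  rw [swap2]
  ring

theorem part2 (hΩ : IsOpen Ω)
    (hcone : ∀ p ∈ Ω, ∀ s : ℝ, 0 < s → (p.1, s • p.2) ∈ Ω)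
    (hL : SmOn Ω L) (hhom : HomOn Ω 2 L)
    (hdet : ∀ p ∈ Ω, IsUnit (gmet L p.1 p.2).det) :
    (∀ p ∈ Ω, ∀ α, ricciOne (nConn L) α p.1 p.2 = 0)
      ↔ (∀ p ∈ Ω, ricciScalar (nConn L) p.1 p.2 = 0
          ∧ ∀ α, chiForm (nConn L) α p.1 p.2 = 0) := by
  constructor
  · intro hb p hp
    obtain ⟨x, v⟩ := p
    have hric0 : ∀ q ∈ Ω, ricciScalar (nConn L) q.1 q.2 = 0 := by
      intro q hq
      have hsh : ricciScalar (nConn L) q.1 q.2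
          = ∑ b, ricciOne (nConn L) b q.1 q.2 * q.2 b := rfl
      rw [hsh, Finset.sum_congr rfl fun b (_ : b ∈ Finset.univ) => by
        rw [hb q hq b, zero_mul]]
      simp
    refine ⟨hric0 (x, v) hp, fun α => ?_⟩
    rw [chi_id hΩ hcone hL hhom hdet hp α, pdv_zero_of hΩ hric0 hp, hb (x, v) hp α]
    ring
  · intro hc p hp α
    obtain ⟨x, v⟩ := p
    have hric0 : ∀ q ∈ Ω, ricciScalar (nConn L) q.1 q.2 = 0 := fun q hq => (hc q hq).1
    have h1 := chi_id hΩ hcone hL hhom hdet hp α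
    rw [(hc (x, v) hp).2 α, pdv_zero_of hΩ hric0 hp] at h1
    linarith

end AuxTools

/-- Theorem (Sec. 6): in dimension `m ≥ 3`, the vacuum equation
`R^μ{}_{μα} − (1/2)(g^{μν}∂R^σ{}_{σν}/∂v^μ) g_{αβ}v^β = 0` is equivalent to the
vanishing of the Ricci 1-form `R^μ{}_{μα} = 0`, which is equivalent to
`Ric(v) = 0 ∧ χ_α = 0`. -/
theorem statement17 {m : ℕ} (hm : 3 ≤ m)
    (Ω : Set (Vec m × Vec m)) (hΩopen : IsOpen Ω) (hΩne : Ω.Nonempty)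
    (hΩslit : ∀ p ∈ Ω, p.2 ≠ 0)
    (hΩcone : ∀ p ∈ Ω, ∀ s : ℝ, 0 < s → (p.1, s • p.2) ∈ Ω)
    (L : Vec m → Vec m → ℝ)
    (hLsmooth : ContDiffOn ℝ (⊤ : ℕ∞) (fun p : Vec m × Vec m => L p.1 p.2) Ω)
    (hLhom : ∀ p ∈ Ω, ∀ s : ℝ, 0 < s → L p.1 (s • p.2) = s ^ 2 * L p.1 p.2)
    (hLinv : ∀ p ∈ Ω, IsUnit (gmet L p.1 p.2).det)
    : ((∀ p ∈ Ω, ∀ α,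
          ricciOne (nConn L) α p.1 p.2
            - (1/2) * (∑ μ, ∑ ν, ginv L p.1 p.2 μ ν
                * pdv (ricciOne (nConn L) ν) μ p.1 p.2)
              * (∑ β, gmet L p.1 p.2 α β * p.2 β) = 0)
        ↔ (∀ p ∈ Ω, ∀ α, ricciOne (nConn L) α p.1 p.2 = 0))
      ∧ ((∀ p ∈ Ω, ∀ α, ricciOne (nConn L) α p.1 p.2 = 0)
        ↔ (∀ p ∈ Ω, ricciScalar (nConn L) p.1 p.2 = 0
            ∧ ∀ α, chiForm (nConn L) α p.1 p.2 = 0)) := by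
  have hL : SmOn Ω L := fun n => hLsmooth.of_le (by exact_mod_cast le_top)
  have hhom2 : HomOn Ω 2 L := by
    intro p hp s hs
    rw [hLhom p hp s hs, zpow_two, ← pow_two]
  exact ⟨part1 hm hΩopen hΩcone hL hhom2 hLinv,
    part2 hΩopen hΩcone hL hhom2 hLinv⟩
end
end

section
/- Let L be a pseudo-Finsler Lagrangian on Ω with spray nonlinear connection N and nonlinear curvature R^μ{}_{αβ}, and define the energy-momentum 1-form Z_α := R^μ{}_{μα} − (1/2)(g^{μν}∂R^σ{}_{σν}/∂v^μ)·g_{αβ}v^β on Ω (the Finslerian Einstein equation with source Z). Then: (i) for every (x,v) ∈ Ω with L(x,v) = 0 (a lightlike vector) one has Ric(v) = Z_α v^α; (ii) consequently, Ric(v) ≥ 0 for all (x,v) ∈ Ω with L(x,v) = 0 (the null convergence condition) if and only if Z_α v^α ≥ 0 for all (x,v) ∈ Ω with L(x,v) = 0 (the null energy condition). -/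
open scoped BigOperators

noncomputable section

variable {m : ℕ}

/-- The energy-momentum 1-form of Eq. (cmbt):
`Z_α = R^μ{}_{μα} − (1/2)(g^{μν}∂R^σ{}_{σν}/∂v^μ) g_{αβ}v^β`. -/
def enMom (L : Vec m → Vec m → ℝ) (α : Fin m) (x v : Vec m) : ℝ :=
  ricciOne (nConn L) α x v
    - (1/2) * (∑ μ, ∑ ν, ginv L x v μ ν * pdv (ricciOne (nConn L) ν) μ x v)
      * (∑ β, gmet L x v α β * v β)

section AuxLemmas

variable {m : ℕ}

lemma clm_apply_sum (D : Vec m →L[ℝ] ℝ) (v : Vec m) :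
    D v = ∑ β, v β * D (Pi.single β 1) := by
  have hv : v = ∑ β, (v β) • (Pi.single β (1 : ℝ) : Vec m) := by
    funext j
    simp [Finset.sum_apply, Pi.single_apply, mul_ite]
  calc D v = D (∑ β, (v β) • (Pi.single β (1 : ℝ) : Vec m)) := by rw [← hv]
    _ = ∑ β, v β * D (Pi.single β 1) := by
        rw [map_sum]
        exact Finset.sum_congr rfl fun β _ => by rw [map_smul, smul_eq_mul]

lemma euler_hom {k : ℕ} {f : Vec m → ℝ} {v : Vec m}
    (hf : DifferentiableAt ℝ f v)
    (hhom : ∀ s : ℝ, 0 < s → f (s • v) = s ^ k * f v) :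
    fderiv ℝ f v v = k * f v := by
  have hc : HasDerivAt (fun s : ℝ => s • v) v 1 := by
    simpa using (hasDerivAt_id (1 : ℝ)).smul_const v
  have h1 : HasDerivAt (fun s : ℝ => f (s • v)) (fderiv ℝ f v v) 1 := by
    exact
      hf.hasFDerivAt.comp_hasDerivAt_of_eq 1 hc (one_smul ℝ v).symm
  have h2 : HasDerivAt (fun s : ℝ => s ^ k * f v) (k * f v) 1 := by
    simpa using (hasDerivAt_pow k (1 : ℝ)).mul_const (f v)
  have heq : (fun s : ℝ => f (s • v)) =ᶠ[nhds (1 : ℝ)] fun s => s ^ k * f v := by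
    filter_upwards [eventually_gt_nhds zero_lt_one] with s hs
    exact hhom s hs
  exact h1.unique (h2.congr_of_eventuallyEq heq)

end AuxLemmas

/-- Proposition (Sec. 6): with the Einstein equation source `Z`, on lightlike vectors
`Ric(v) = Z_α v^α`; consequently the null convergence condition is equivalent to the
null energy condition. -/
theorem statement18 {m : ℕ} (hm : 2 ≤ m)
    (Ω : Set (Vec m × Vec m)) (hΩopen : IsOpen Ω) (hΩne : Ω.Nonempty)
    (hΩslit : ∀ p ∈ Ω, p.2 ≠ 0)
    (hΩcone : ∀ p ∈ Ω, ∀ s : ℝ, 0 < s → (p.1, s • p.2) ∈ Ω)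
    (L : Vec m → Vec m → ℝ)
    (hLsmooth : ContDiffOn ℝ (⊤ : ℕ∞) (fun p : Vec m × Vec m => L p.1 p.2) Ω)
    (hLhom : ∀ p ∈ Ω, ∀ s : ℝ, 0 < s → L p.1 (s • p.2) = s ^ 2 * L p.1 p.2)
    (hLinv : ∀ p ∈ Ω, IsUnit (gmet L p.1 p.2).det)
    : (∀ p ∈ Ω, L p.1 p.2 = 0 →
        ricciScalar (nConn L) p.1 p.2 = ∑ α, enMom L α p.1 p.2 * p.2 α)
      ∧ ((∀ p ∈ Ω, L p.1 p.2 = 0 → 0 ≤ ricciScalar (nConn L) p.1 p.2)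
        ↔ (∀ p ∈ Ω, L p.1 p.2 = 0 → 0 ≤ ∑ α, enMom L α p.1 p.2 * p.2 α)) := by

  have key : ∀ p ∈ Ω, L p.1 p.2 = 0 →
      ricciScalar (nConn L) p.1 p.2 = ∑ α, enMom L α p.1 p.2 * p.2 α := by
    rintro ⟨x, v⟩ hp hL0
    set S : Set (Vec m) := (fun w => ((x, w) : Vec m × Vec m)) ⁻¹' Ω with hS
    have hSopen : IsOpen S :=
      hΩopen.preimage (Continuous.prodMk continuous_const continuous_id)
    have hvS : v ∈ S := hp
    have hLx : ContDiffOn ℝ (⊤ : ℕ∞) (fun w => L x w) S := by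
      have hconst : ContDiff ℝ (⊤ : ℕ∞) (fun w : Vec m => ((x, w) : Vec m × Vec m)) :=
        contDiff_const.prodMk contDiff_id
      exact hLsmooth.comp hconst.contDiffOn (fun w hw => hw)
    have hCd : ∀ w ∈ S, ContDiffAt ℝ (⊤ : ℕ∞) (L x) w :=
      fun w hw => hLx.contDiffAt (hSopen.mem_nhds hw)
    have hdL : ∀ w ∈ S, DifferentiableAt ℝ (L x) w :=
      fun w hw => (hCd w hw).differentiableAt (by simp)
    set g1 : Fin m → Vec m → ℝ :=
      fun β w => fderiv ℝ (L x) w (Pi.single β 1) with hg1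
    have hdg : ∀ β, DifferentiableAt ℝ (g1 β) v := by
      intro β
      have h := ((hCd v hvS).fderiv_right (m := 1) ((by exact WithTop.coe_le_coe.mpr le_top))).differentiableAt (by simp)
      exact h.clm_apply (differentiableAt_const _)
    have homL : ∀ s : ℝ, 0 < s → L x (s • v) = s ^ 2 * L x v :=
      fun s hs => hLhom (x, v) hp s hs
    have homg : ∀ β, ∀ s : ℝ, 0 < s → g1 β (s • v) = s ^ 1 * g1 β v := by
      intro β s hs
      have hsv : s • v ∈ S := hΩcone (x, v) hp s hs
      have hD2 : HasFDerivAt (L x) (fderiv ℝ (L x) (s • v)) (s • v) :=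
        (hdL _ hsv).hasFDerivAt
      have hsm : HasFDerivAt (fun w : Vec m => s • w)
          (s • ContinuousLinearMap.id ℝ (Vec m)) v := (hasFDerivAt_id v).const_smul s
      have hcomp : HasFDerivAt (fun w => L x (s • w))
          ((fderiv ℝ (L x) (s • v)).comp (s • ContinuousLinearMap.id ℝ (Vec m))) v :=
        hD2.comp v hsm
      have hmul : HasFDerivAt (fun w => s ^ 2 * L x w)
          ((s ^ 2) • fderiv ℝ (L x) v) v :=
        (hdL v hvS).hasFDerivAt.const_mul (s ^ 2)
      have heqf : (fun w => L x (s • w)) =ᶠ[nhds v] (fun w => s ^ 2 * L x w) := by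
        filter_upwards [hSopen.mem_nhds hvS] with w hw
        exact hLhom (x, w) hw s hs
      have h2 : HasFDerivAt (fun w => L x (s • w)) ((s ^ 2) • fderiv ℝ (L x) v) v :=
        hmul.congr_of_eventuallyEq heqf
      have huniq := hcomp.unique h2
      have happ := congrArg (fun D : Vec m →L[ℝ] ℝ => D (Pi.single β 1)) huniq
      simp only [ContinuousLinearMap.comp_apply, ContinuousLinearMap.smul_apply,
        ContinuousLinearMap.id_apply, map_smul, smul_eq_mul] at happ
      have hsne : s ≠ 0 := ne_of_gt hs
      field_simp [hg1]
      nlinarith [happ]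
    have eulerL : fderiv ℝ (L x) v v = 2 * L x v := by
      have h := euler_hom (k := 2) (hdL v hvS) homL
      simpa using h
    have eulerg : ∀ β, fderiv ℝ (g1 β) v v = g1 β v := by
      intro β
      have h := euler_hom (k := 1) (hdg β) (homg β)
      simpa using h
    have hgm : ∀ α β, gmet L x v α β = fderiv ℝ (g1 β) v (Pi.single α 1) := by
      intro α β; rfl
    have hrow : ∀ β, ∑ α, gmet L x v α β * v α = g1 β v := by
      intro β
      calc ∑ α, gmet L x v α β * v α
          = ∑ α, v α * fderiv ℝ (g1 β) v (Pi.single α 1) :=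
            Finset.sum_congr rfl fun α _ => by rw [hgm, mul_comm]
        _ = fderiv ℝ (g1 β) v v := (clm_apply_sum _ v).symm
        _ = g1 β v := eulerg β
    have hQ : ∑ α, (∑ β, gmet L x v α β * v β) * v α = 0 := by
      have h1 : ∑ α, (∑ β, gmet L x v α β * v β) * v α
          = ∑ β, (∑ α, gmet L x v α β * v α) * v β := by
        simp_rw [Finset.sum_mul]
        rw [Finset.sum_comm]
        exact Finset.sum_congr rfl fun β _ => Finset.sum_congr rfl fun α _ => by ring
      rw [h1]
      have h2 : ∑ β, (∑ α, gmet L x v α β * v α) * v β = ∑ β, v β * g1 β v :=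
        Finset.sum_congr rfl fun β _ => by rw [hrow, mul_comm]
      rw [h2]
      have h3 : ∑ β, v β * g1 β v = fderiv ℝ (L x) v v :=
        (clm_apply_sum (fderiv ℝ (L x) v) v).symm
      rw [h3, eulerL, hL0, mul_zero]
    have expand : ∀ α, enMom L α x v * v α
        = ricciOne (nConn L) α x v * v α
          - ((1 / 2) * (∑ μ, ∑ ν, ginv L x v μ ν * pdv (ricciOne (nConn L) ν) μ x v))
            * ((∑ β, gmet L x v α β * v β) * v α) := by
      intro α; simp only [enMom]; ring
    calc ricciScalar (nConn L) x v
        = ∑ α, ricciOne (nConn L) α x v * v α := rfl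
      _ = ∑ α, enMom L α x v * v α := by
          rw [Finset.sum_congr rfl fun α _ => expand α, Finset.sum_sub_distrib,
            ← Finset.mul_sum, hQ, mul_zero, sub_zero]
  refine ⟨key, ?_, ?_⟩
  · intro h p hp hL0
    rw [← key p hp hL0]
    exact h p hp hL0
  · intro h p hp hL0
    rw [key p hp hL0]
    exact h p hp hL0
end
end
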